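/- Let P be a set of n points in the plane in general position (no three collinear), and let e and e' be two closed straight-line segments, each joining two of the points, such that e and e' have no endpoint in common and do not intersect. Then there exists a plane Hamiltonian path on P containing both e and e', i.e., a sequence of all n points such that the n−1 straight-line segments joining consecutive points are pairwise non-crossing (any two of them intersect at most in a common endpoint) and include e and e'. -/

import Mathlib

open Set

/-- Cyclic successor on `Fin m` (indices modulo `m`). -/
def finCycSucc {m : ℕ} (i : Fin m) : Fin m := ⟨((i : ℕ) + 1) % m, Nat.mod_lt _ i.pos⟩

/-- `p` is a proper (transversal) crossing point of the arcs `α` and `β` : `p` lies on both arcs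
and, locally around `p`, the arc `β` has points in two different sides of `α`
(it passes from one side of `α` to the other). -/
def ProperCrossingAt (α β : Set (ℝ × ℝ)) (p : ℝ × ℝ) : Prop :=
  p ∈ α ∩ β ∧
    ∀ U ∈ nhds p, ∃ V ∈ nhds p, V ⊆ U ∧
      ∃ q₁ ∈ β ∩ V, ∃ q₂ ∈ β ∩ V, q₁ ∉ α ∧ q₂ ∉ α ∧
        connectedComponentIn (V \ α) q₁ ≠ connectedComponentIn (V \ α) q₂

/-- A simple drawing of the complete graph `K n` in the plane: `n` distinct vertex points,
a simple arc joining each pair of distinct vertices, no edge passing through another vertex,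
and any two (distinct) edges meeting in at most one point, which is either a common endpoint
or a proper crossing. -/
structure SimpleDrawing (n : ℕ) where
  vert : Fin n → ℝ × ℝ
  vert_inj : Function.Injective vert
  arc : Fin n → Fin n → Set (ℝ × ℝ)
  arc_symm : ∀ i j, arc i j = arc j i
  arc_simple : ∀ i j, i ≠ j → ∃ f : ℝ → ℝ × ℝ,
    ContinuousOn f (Icc (0:ℝ) 1) ∧ InjOn f (Icc (0:ℝ) 1) ∧
    f '' Icc (0:ℝ) 1 = arc i j ∧ f 0 = vert i ∧ f 1 = vert j
  no_through_vertex : ∀ i j k, i ≠ j → vert k ∈ arc i j → k = i ∨ k = j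
  inter_subsingleton : ∀ i j k l, i ≠ j → k ≠ l → s(i, j) ≠ s(k, l) →
    (arc i j ∩ arc k l).Subsingleton
  inter_proper : ∀ i j k l, i ≠ j → k ≠ l → s(i, j) ≠ s(k, l) →
    ∀ p ∈ arc i j ∩ arc k l,
      (∃ a, (a = i ∨ a = j) ∧ (a = k ∨ a = l) ∧ p = vert a) ∨
      ProperCrossingAt (arc i j) (arc k l) p

namespace SimpleDrawing

variable {n : ℕ} (D : SimpleDrawing n)

/-- The arc realizing an (unordered) edge. -/
def earc : Sym2 (Fin n) → Set (ℝ × ℝ) := Sym2.lift ⟨D.arc, D.arc_symm⟩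

/-- Two (distinct) edges cross: they share a point that is not a common endpoint. -/
def Crosses (e e' : Sym2 (Fin n)) : Prop :=
  e ≠ e' ∧ ∃ p ∈ D.earc e ∩ D.earc e', ¬∃ a, a ∈ e ∧ a ∈ e' ∧ p = D.vert a

/-- A set of edges is plane if no two of its edges cross. -/
def IsPlane (E : Set (Sym2 (Fin n))) : Prop :=
  ∀ e ∈ E, ∀ e' ∈ E, ¬D.Crosses e e'

/-- A plane subdrawing: a plane set of (genuine, non-loop) edges of the drawing. -/
def IsPlaneSub (E : Set (Sym2 (Fin n))) : Prop :=
  (∀ e ∈ E, ¬e.IsDiag) ∧ D.IsPlane E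

/-- A maximal plane subdrawing: no further edge can be added while keeping the set plane. -/
def IsMaximalPlaneSub (E : Set (Sym2 (Fin n))) : Prop :=
  D.IsPlaneSub E ∧ ∀ e, ¬e.IsDiag → e ∉ E → ¬D.IsPlaneSub (insert e E)

/-- The triangle of the drawing spanned by three vertices: the union of the three arcs. -/
def triangle (a b c : Fin n) : Set (ℝ × ℝ) := D.arc a b ∪ D.arc b c ∪ D.arc a c

/-- `S` is a side of the triangle on `a b c`: the closure of a connected component of the
complement of the triangle. -/
def IsSideOf (S : Set (ℝ × ℝ)) (a b c : Fin n) : Prop :=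
  ∃ p, p ∉ D.triangle a b c ∧ S = closure (connectedComponentIn (D.triangle a b c)ᶜ p)

/-- `S` is a convex side of the triangle on `a b c`: every edge of the drawing with both
endpoints in `S` is contained in `S`. -/
def IsConvexSideOf (S : Set (ℝ × ℝ)) (a b c : Fin n) : Prop :=
  D.IsSideOf S a b c ∧
    ∀ i j : Fin n, i ≠ j → D.vert i ∈ S → D.vert j ∈ S → D.arc i j ⊆ S

/-- A convex drawing: every triangle has a convex side. -/
def Convex : Prop :=
  ∀ a b c : Fin n, a ≠ b → b ≠ c → a ≠ c → ∃ S, D.IsConvexSideOf S a b c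

/-- A plane Hamiltonian cycle: a plane set of `n` edges forming a cycle through all vertices. -/
def IsPlaneHamCycle (E : Set (Sym2 (Fin n))) : Prop :=
  D.IsPlane E ∧ ∃ c : ZMod n → Fin n, Function.Bijective c ∧
    E = {e | ∃ k : ZMod n, e = s(c k, c (k + 1))}

/-- A plane Hamiltonian path from `s` to `t`: a plane set of `n-1` edges forming a path
through all `n` vertices with endpoints `s` and `t`. -/
def IsPlaneHamPath (E : Set (Sym2 (Fin n))) (s t : Fin n) : Prop :=
  D.IsPlane E ∧ ∃ p : Fin n → Fin n, Function.Bijective p ∧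
    (∀ i : Fin n, (i : ℕ) = 0 → p i = s) ∧
    (∀ i : Fin n, (i : ℕ) = n - 1 → p i = t) ∧
    E = {e | ∃ i j : Fin n, (j : ℕ) = (i : ℕ) + 1 ∧ e = s(p i, p j)}

/-- The edge from `a` towards `b` emanates (at `a`) into the set `C`. -/
def EmanatesInto (a b : Fin n) (C : Set (ℝ × ℝ)) : Prop :=
  ∃ U ∈ nhds (D.vert a), (D.arc a b ∩ U) \ {D.vert a} ⊆ C

/-- At the vertex `vs`, the edges towards `b` and towards `d` emanate into different
connected components of the complement of the triangle on `vs`, `a`, `c`;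
i.e. the pair `{a, c}` locally separates `b` from `d` in the rotation at `vs`. -/
def SeparatesAt (vs a c b d : Fin n) : Prop :=
  ∃ p q : ℝ × ℝ, p ∉ D.triangle vs a c ∧ q ∉ D.triangle vs a c ∧
    connectedComponentIn (D.triangle vs a c)ᶜ p ≠ connectedComponentIn (D.triangle vs a c)ᶜ q ∧
    D.EmanatesInto vs b (connectedComponentIn (D.triangle vs a c)ᶜ p) ∧
    D.EmanatesInto vs d (connectedComponentIn (D.triangle vs a c)ᶜ q)

/-- `lab` labels the `n-1` non-star vertices according to the cyclic order (the rotation)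
in which the star edges emanate from the star vertex `vs`: it is a bijection onto the
non-star vertices such that, for any indices `i < j < k < l`, the edges towards `lab i` and
`lab k` locally separate the edges towards `lab j` and `lab l` at `vs`. -/
def IsRotationLabeling (vs : Fin n) (lab : Fin (n - 1) → Fin n) : Prop :=
  Function.Injective lab ∧ range lab = {x | x ≠ vs} ∧
    ∀ i j k l : Fin (n - 1), i < j → j < k → k < l →
      D.SeparatesAt vs (lab i) (lab k) (lab j) (lab l)

/-- The edge `{lab x, lab (x+1)}` (indices mod `n-1`) is a bad edge with witness `w`:
it crosses the star edge `{lab w, vs}`. -/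
def BadWitness (vs : Fin n) (lab : Fin (n - 1) → Fin n) (x w : Fin (n - 1)) : Prop :=
  D.Crosses s(lab x, lab (finCycSucc x)) s(lab w, vs)

/-- The non-star edge `{lab x, lab y}` is star-crossing: it crosses some star edge. -/
def StarCrossing (vs : Fin n) (lab : Fin (n - 1) → Fin n) (x y : Fin (n - 1)) : Prop :=
  ∃ w : Fin (n - 1), D.Crosses s(lab x, lab y) s(lab w, vs)

end SimpleDrawing

/-- Four indices appear in this cyclic order. -/
def CyclicOrdered {m : ℕ} (a b c d : Fin m) : Prop :=
  (a < b ∧ b < c ∧ c < d) ∨ (b < c ∧ c < d ∧ d < a) ∨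
  (c < d ∧ d < a ∧ a < b) ∨ (d < a ∧ a < b ∧ b < c)

namespace GHP



/-- 2D cross product. -/
def det2 (v w : ℝ × ℝ) : ℝ := v.1 * w.2 - v.2 * w.1
/-- 2D dot product. -/
def dot2 (v w : ℝ × ℝ) : ℝ := v.1 * w.1 + v.2 * w.2


lemma aff_det2 (r : ℝ) (V W : ℝ × ℝ) (α β : ℝ) (x y : ℝ × ℝ) (h : α + β = 1) :
    r * det2 V (α • x + β • y - W) = α * (r * det2 V (x - W)) + β * (r * det2 V (y - W)) := by
  have hβ : β = 1 - α := by linarith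
  subst hβ
  simp only [det2, Prod.fst_add, Prod.snd_add, Prod.fst_sub, Prod.snd_sub,
    Prod.smul_fst, Prod.smul_snd, smul_eq_mul]
  ring

lemma aff_phis (s : ℝ) (A q : ℝ × ℝ) (α β : ℝ) (x y : ℝ × ℝ) (h : α + β = 1) :
    s * det2 A (α • x + β • y - q) - dot2 A (α • x + β • y - q)
      = α * (s * det2 A (x - q) - dot2 A (x - q)) + β * (s * det2 A (y - q) - dot2 A (y - q)) := by
  have hβ : β = 1 - α := by linarith
  subst hβ
  simp only [det2, dot2, Prod.fst_add, Prod.snd_add, Prod.fst_sub, Prod.snd_sub,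
    Prod.smul_fst, Prod.smul_snd, smul_eq_mul]
  ring

lemma aff_det2c (r c : ℝ) (V W : ℝ × ℝ) (α β : ℝ) (x y : ℝ × ℝ) (h : α + β = 1) :
    r * det2 V (α • x + β • y - W) + c
      = α * (r * det2 V (x - W) + c) + β * (r * det2 V (y - W) + c) := by
  have hβ : β = 1 - α := by linarith
  subst hβ
  simp only [det2, Prod.fst_add, Prod.snd_add, Prod.fst_sub, Prod.snd_sub,
    Prod.smul_fst, Prod.smul_snd, smul_eq_mul]
  ring

lemma seg_mem {p x y : ℝ × ℝ} (h : p ∈ segment ℝ x y) :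
    ∃ α β : ℝ, 0 ≤ α ∧ 0 ≤ β ∧ α + β = 1 ∧ p = α • x + β • y := by
  obtain ⟨a, b, ha, hb, hab, he⟩ := h
  exact ⟨a, b, ha, hb, hab, he.symm⟩

lemma exists_smul_of_det2_eq_zero {A v : ℝ × ℝ} (hA : A ≠ 0) (h : det2 A v = 0) :
    ∃ r : ℝ, v = r • A := by
  rcases eq_or_ne A.1 0 with h1 | h1
  · have h2 : A.2 ≠ 0 := by
      intro h2; exact hA (Prod.ext h1 h2)
    refine ⟨v.2 / A.2, ?_⟩
    have : v.1 = 0 := by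
      have h3 := h; unfold det2 at h3
      rw [h1] at h3
      have : A.2 * v.1 = 0 := by linarith
      rcases mul_eq_zero.mp this with h | h
      · exact absurd h h2
      · exact h
    apply Prod.ext
    · simp [this, h1]
    · simp only [Prod.smul_snd, smul_eq_mul]; field_simp
  · refine ⟨v.1 / A.1, ?_⟩
    apply Prod.ext
    · simp only [Prod.smul_fst, smul_eq_mul]; field_simp
    · unfold det2 at h
      simp only [Prod.smul_snd, smul_eq_mul]; field_simp
      nlinarith [h]

lemma collinear_of_det2 {x y z : ℝ × ℝ} (h : det2 (y - x) (z - x) = 0) :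
    Collinear ℝ ({x, y, z} : Set (ℝ × ℝ)) := by
  rcases eq_or_ne (y - x) 0 with hy | hy
  · have hxy : y = x := by rwa [sub_eq_zero] at hy
    rw [collinear_iff_of_mem (Set.mem_insert x _)]
    refine ⟨z - x, ?_⟩
    rintro p (rfl | rfl | rfl)
    · exact ⟨0, by simp⟩
    · exact ⟨0, by simp [hxy]⟩
    · exact ⟨1, by simp⟩
  · obtain ⟨r, hr⟩ := exists_smul_of_det2_eq_zero hy h
    rw [collinear_iff_of_mem (Set.mem_insert x _)]
    refine ⟨y - x, ?_⟩
    rintro p (rfl | rfl | rfl)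
    · exact ⟨0, by simp⟩
    · exact ⟨1, by simp⟩
    · exact ⟨r, by rw [← hr]; simp⟩

lemma collinear_of_mem_segment {x y z : ℝ × ℝ} (h : z ∈ segment ℝ x y) :
    Collinear ℝ ({x, y, z} : Set (ℝ × ℝ)) := by
  obtain ⟨α, β, hα, hβ, hs, he⟩ := seg_mem h
  apply collinear_of_det2
  have : z - x = β • (y - x) := by
    rw [he]
    have : α = 1 - β := by linarith
    rw [this]
    ext <;> simp <;> ring
  rw [this]
  unfold det2
  simp
  ring

lemma not_mem_segment {x y z : ℝ × ℝ}
    (h : ¬ Collinear ℝ ({x, y, z} : Set (ℝ × ℝ))) : z ∉ segment ℝ x y :=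
  fun hz => h (collinear_of_mem_segment hz)

lemma det2_ne_of_not_collinear {x y z : ℝ × ℝ}
    (h : ¬ Collinear ℝ ({x, y, z} : Set (ℝ × ℝ))) : det2 (y - x) (z - x) ≠ 0 :=
  fun hd => h (collinear_of_det2 hd)

/-- Master separation lemma. -/
lemma master {φ : ℝ × ℝ → ℝ}
    (haff : ∀ (α β : ℝ) (x y : ℝ × ℝ), α + β = 1 → φ (α • x + β • y) = α * φ x + β * φ y)
    {x1 y1 x2 y2 p : ℝ × ℝ}
    (h1 : φ x1 ≤ 0) (h2 : φ y1 ≤ 0) (h3 : 0 ≤ φ x2) (h4 : 0 ≤ φ y2)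
    (hstr : φ x1 < 0 ∨ φ y1 < 0 ∨ 0 < φ x2 ∨ 0 < φ y2)
    (hc1 : x1 ∉ segment ℝ x2 y2) (hc2 : y1 ∉ segment ℝ x2 y2)
    (hc3 : x2 ∉ segment ℝ x1 y1) (hc4 : y2 ∉ segment ℝ x1 y1)
    (hp1 : p ∈ segment ℝ x1 y1) (hp2 : p ∈ segment ℝ x2 y2) : False := by
  obtain ⟨α, β, hα, hβ, hs, he⟩ := seg_mem hp1
  obtain ⟨α', β', hα', hβ', hs', he'⟩ := seg_mem hp2
  have e1 : φ p = α * φ x1 + β * φ y1 := by rw [he]; exact haff _ _ _ _ hs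
  have e2 : φ p = α' * φ x2 + β' * φ y2 := by rw [he']; exact haff _ _ _ _ hs'
  have hple : φ p ≤ 0 := by nlinarith
  have hpge : 0 ≤ φ p := by nlinarith
  have hp0 : φ p = 0 := le_antisymm hple hpge
  have t1 : α * φ x1 = 0 := by nlinarith
  have t2 : β * φ y1 = 0 := by nlinarith
  have t3 : α' * φ x2 = 0 := by nlinarith
  have t4 : β' * φ y2 = 0 := by nlinarith
  rcases hstr with hx | hx | hx | hx
  · have : α = 0 := by
      rcases mul_eq_zero.mp t1 with h | h
      · exact h
      · exact absurd h (ne_of_lt hx)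
    have hpy : p = y1 := by rw [he, this]; simp [show β = 1 by linarith]
    exact hc2 (hpy ▸ hp2)
  · have : β = 0 := by
      rcases mul_eq_zero.mp t2 with h | h
      · exact h
      · exact absurd h (ne_of_lt hx)
    have hpy : p = x1 := by rw [he, this]; simp [show α = 1 by linarith]
    exact hc1 (hpy ▸ hp2)
  · have : α' = 0 := by
      rcases mul_eq_zero.mp t3 with h | h
      · exact h
      · exact absurd h (ne_of_gt hx)
    have hpy : p = y2 := by rw [he', this]; simp [show β' = 1 by linarith]
    exact hc4 (hpy ▸ hp1)
  · have : β' = 0 := by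
      rcases mul_eq_zero.mp t4 with h | h
      · exact h
      · exact absurd h (ne_of_gt hx)
    have hpy : p = x2 := by rw [he', this]; simp [show α' = 1 by linarith]
    exact hc3 (hpy ▸ hp1)

/-- Adjacent segments sharing vertex `y` meet only at `y`, provided `x, y, z` not collinear. -/
lemma adjacent_inter {x y z p : ℝ × ℝ}
    (h : ¬ Collinear ℝ ({y, x, z} : Set (ℝ × ℝ)))
    (hp1 : p ∈ segment ℝ x y) (hp2 : p ∈ segment ℝ y z) : p = y := by
  have hD : det2 (x - y) (z - y) ≠ 0 := det2_ne_of_not_collinear h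
  set u := x - y with hu
  set w := z - y with hw
  set D := det2 u w with hDdef
  -- φ t := sgn * det2 (u+w) (t - y); φ x = -sgn*D, φ y = 0, φ z = sgn*D
  have key : ∀ sgn : ℝ, ∀ t : ℝ × ℝ, (fun t => sgn * det2 (u + w) (t - y)) t
      = sgn * det2 (u+w) (t - y) := fun _ _ => rfl
  set sgn : ℝ := if 0 < D then 1 else -1 with hsgn
  set φ : ℝ × ℝ → ℝ := fun t => sgn * det2 (u + w) (t - y) with hφ
  have haff : ∀ (α β : ℝ) (x' y' : ℝ × ℝ), α + β = 1 →
      φ (α • x' + β • y') = α * φ x' + β * φ y' := by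
    intro α β x' y' hs
    exact aff_det2 sgn (u+w) y α β x' y' hs
  have hφx : φ x = sgn * (-D) := by
    simp only [hφ]
    congr 1
    show det2 (u + w) (x - y) = -D
    rw [hDdef]
    unfold det2
    show (u+w).1 * u.2 - (u+w).2 * u.1 = -(u.1*w.2 - u.2*w.1)
    simp [Prod.fst_add, Prod.snd_add]; ring
  have hφz : φ z = sgn * D := by
    simp only [hφ]
    congr 1
    show det2 (u + w) (z - y) = D
    rw [hDdef]
    unfold det2
    show (u+w).1 * w.2 - (u+w).2 * w.1 = u.1*w.2 - u.2*w.1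
    simp [Prod.fst_add, Prod.snd_add]; ring
  have hφy : φ y = 0 := by simp [hφ, det2]
  have hsD : 0 < sgn * D := by
    rcases lt_trichotomy D 0 with h | h | h
    · rw [hsgn]; rw [if_neg (by linarith)]; nlinarith
    · exact absurd h hD
    · rw [hsgn, if_pos h]; linarith
  -- φ p = 0 from both sides
  obtain ⟨α, β, hα, hβ, hs, he⟩ := seg_mem hp1
  obtain ⟨α', β', hα', hβ', hs', he'⟩ := seg_mem hp2
  have e1 : φ p = α * φ x + β * φ y := by rw [he]; exact haff _ _ _ _ hs
  have e2 : φ p = α' * φ y + β' * φ z := by rw [he']; exact haff _ _ _ _ hs'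
  have hple : φ p ≤ 0 := by rw [e1, hφx, hφy]; nlinarith
  have hpge : 0 ≤ φ p := by rw [e2, hφy, hφz]; nlinarith
  have hα0 : α = 0 := by
    have h0 : α * (sgn * (-D)) = 0 := by
      have := le_antisymm hple hpge
      rw [e1, hφx, hφy] at this; nlinarith
    have : α * (sgn * D) = 0 := by nlinarith
    rcases mul_eq_zero.mp this with h | h
    · exact h
    · exact absurd h (ne_of_gt hsD)
  rw [he, hα0]; simp [show β = 1 by linarith]


open Finset

lemma exists_sorted_enum {n : ℕ} {α : Type*} [LinearOrder α] (K : Fin n → α)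
    (hK : Function.Injective K) :
    ∃ σ : Fin n → Fin n, Function.Bijective σ ∧ StrictMono (K ∘ σ) := by
  classical
  rcases Nat.eq_zero_or_pos n with rfl | hn
  · exact ⟨id, Function.bijective_id, fun i => absurd i.pos (by simp)⟩
  have hne : Nonempty (Fin n) := ⟨⟨0, hn⟩⟩
  set S : Finset α := Finset.univ.image K with hS
  have hcard : S.card = n := by
    rw [hS, Finset.card_image_of_injective _ hK, Finset.card_univ, Fintype.card_fin]
  set e := S.orderIsoOfFin hcard with he
  have hKe : ∀ i, K (Function.invFun K (e i : α)) = (e i : α) := by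
    intro i
    apply Function.invFun_eq
    have h2 : (e i : α) ∈ Finset.univ.image K := (e i).2
    obtain ⟨a, _, ha⟩ := Finset.mem_image.mp h2
    exact ⟨a, ha⟩
  refine ⟨fun i => Function.invFun K (e i : α), ?_, ?_⟩
  · rw [← Finite.injective_iff_bijective]
    intro i j hij
    simp only at hij
    have h3 : (e i : α) = (e j : α) := by
      rw [← hKe i, ← hKe j]
      exact congrArg K hij
    exact e.injective (Subtype.ext h3)
  · intro i j hij
    have h4 : e i < e j := e.strictMono hij
    show K _ < K _
    rw [hKe i, hKe j]
    exact h4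

lemma succ_pos_of_between {n : ℕ} {α : Type*} [LinearOrder α] {K : Fin n → α}
    {σ : Fin n → Fin n} (hsm : StrictMono (K ∘ σ)) {x y : Fin n} {ix iy : Fin n}
    (hx : σ ix = x) (hy : σ iy = y) (hlt : K x < K y)
    (hno : ∀ z : Fin n, ¬(K x < K z ∧ K z < K y)) : (iy : ℕ) = (ix : ℕ) + 1 := by
  have hxy : ix < iy := by
    rcases lt_trichotomy ix iy with h | h | h
    · exact h
    · subst h; rw [hx] at hy; subst hy; exact absurd hlt (lt_irrefl _)
    · have := hsm h
      simp only [Function.comp_apply, hx, hy] at this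
      exact absurd hlt (not_lt.mpr this.le)
  by_contra hne
  have h1 : (ix : ℕ) + 1 < (iy : ℕ) := lt_of_le_of_ne hxy (Ne.symm hne)
  have h2 : (ix : ℕ) + 1 < n := h1.trans iy.isLt
  set j : Fin n := ⟨(ix : ℕ) + 1, h2⟩ with hj
  have hlt1 : ix < j := by simp [hj, Fin.lt_def]
  have hlt2 : j < iy := by simp [hj, Fin.lt_def]; exact h1
  have g1 := hsm hlt1
  have g2 := hsm hlt2
  simp only [Function.comp_apply, hx, hy] at g1 g2
  exact hno (σ j) ⟨g1, g2⟩

lemma lexlt_iff (g1 g2 : ℕ) (f1 f2 : ℝ) (v1 v2 : ℕ) :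
    (toLex (g1, toLex (f1, v1)) < toLex (g2, toLex (f2, v2)))
      ↔ (g1 < g2 ∨ (g1 = g2 ∧ (f1 < f2 ∨ (f1 = f2 ∧ v1 < v2)))) := by
  rw [Prod.Lex.lt_iff, Prod.Lex.lt_iff]
  simp only [ofLex_toLex]

lemma lexK_inj {n : ℕ} (g : Fin n → ℕ) (f : Fin n → ℝ) :
    Function.Injective (fun p : Fin n => toLex (g p, toLex (f p, (p : ℕ)))) := by
  intro x y h
  have h2 : (g x, toLex (f x, (x:ℕ))) = (g y, toLex (f y, (y:ℕ))) := toLex.injective h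
  have h3 : toLex (f x, (x:ℕ)) = toLex (f y, (y:ℕ)) := congrArg Prod.snd h2
  have h4 : (f x, (x:ℕ)) = (f y, (y:ℕ)) := toLex.injective h3
  exact Fin.ext (congrArg Prod.snd h4)

lemma pair_adjacent_general {n : ℕ} {α : Type*} [LinearOrder α] {K : Fin n → α}
    {σ : Fin n → Fin n} (hsm : StrictMono (K ∘ σ)) (hsurj : Function.Surjective σ)
    (x y : Fin n) (hKlt : K x < K y)
    (hno : ∀ z : Fin n, z ≠ x → z ≠ y → ¬(K x < K z ∧ K z < K y)) :
    ∃ i j : Fin n, (j : ℕ) = (i : ℕ) + 1 ∧ σ i = x ∧ σ j = y := by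
  obtain ⟨ix, hix⟩ := hsurj x
  obtain ⟨iy, hiy⟩ := hsurj y
  refine ⟨ix, iy, ?_, hix, hiy⟩
  apply succ_pos_of_between hsm hix hiy hKlt
  intro z hz
  rcases eq_or_ne z x with rfl | hzx
  · exact absurd hz.1 (lt_irrefl _)
  rcases eq_or_ne z y with rfl | hzy
  · exact absurd hz.2 (lt_irrefl _)
  exact hno z hzx hzy hz

variable {n : ℕ}

lemma assemble (P : Fin n → ℝ × ℝ)
    (hadj : ∀ x y z : Fin n, x ≠ y → y ≠ z → x ≠ z →
      ∀ p : ℝ × ℝ, p ∈ segment ℝ (P x) (P y) → p ∈ segment ℝ (P y) (P z) → p = P y)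
    (a b c d : Fin n) (σ : Fin n → Fin n) (hbij : Function.Bijective σ)
    (hnonadj : ∀ t t1 m m1 : Fin n, (t1 : ℕ) = (t : ℕ) + 1 → (m1 : ℕ) = (m : ℕ) + 1 →
      ((t1 : ℕ) < (m : ℕ)) → ∀ p : ℝ × ℝ,
      p ∈ segment ℝ (P (σ t)) (P (σ t1)) → p ∈ segment ℝ (P (σ m)) (P (σ m1)) → False)
    (hab' : ∃ i j : Fin n, (j : ℕ) = (i : ℕ) + 1 ∧ s(σ i, σ j) = s(a, b))
    (hcd' : ∃ i j : Fin n, (j : ℕ) = (i : ℕ) + 1 ∧ s(σ i, σ j) = s(c, d)) :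
    ∃ σ' : Fin n → Fin n, Function.Bijective σ' ∧
      (∀ i₁ j₁ i₂ j₂ : Fin n, (j₁ : ℕ) = (i₁ : ℕ) + 1 → (j₂ : ℕ) = (i₂ : ℕ) + 1 → i₁ ≠ i₂ →
        ∀ p ∈ segment ℝ (P (σ' i₁)) (P (σ' j₁)) ∩ segment ℝ (P (σ' i₂)) (P (σ' j₂)),
          (p = P (σ' i₁) ∨ p = P (σ' j₁)) ∧ (p = P (σ' i₂) ∨ p = P (σ' j₂))) ∧
      (∃ i j : Fin n, (j : ℕ) = (i : ℕ) + 1 ∧ s(σ' i, σ' j) = s(a, b)) ∧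
      (∃ i j : Fin n, (j : ℕ) = (i : ℕ) + 1 ∧ s(σ' i, σ' j) = s(c, d)) := by
  refine ⟨σ, hbij, ?_, hab', hcd'⟩
  have half : ∀ i₁ j₁ i₂ j₂ : Fin n, (j₁ : ℕ) = (i₁ : ℕ) + 1 → (j₂ : ℕ) = (i₂ : ℕ) + 1 →
      ((i₁ : ℕ) < (i₂ : ℕ)) → ∀ p : ℝ × ℝ,
      p ∈ segment ℝ (P (σ i₁)) (P (σ j₁)) → p ∈ segment ℝ (P (σ i₂)) (P (σ j₂)) →
      (p = P (σ i₁) ∨ p = P (σ j₁)) ∧ (p = P (σ i₂) ∨ p = P (σ j₂)) := by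
    intro i₁ j₁ i₂ j₂ h₁ h₂ hlt p hp1 hp2
    rcases lt_or_eq_of_le (Nat.succ_le_of_lt hlt) with h | h
    · exact absurd (hnonadj i₁ j₁ i₂ j₂ h₁ h₂ (h₁ ▸ h) p hp1 hp2) (fun f => f)
    · -- adjacent : j₁ = i₂
      have hj : j₁ = i₂ := Fin.ext (by omega)
      subst hj
      have hinj := hbij.injective
      have d1 : σ i₁ ≠ σ j₁ := fun h => by
        have h2 := congrArg Fin.val (hinj h); omega
      have d2 : σ j₁ ≠ σ j₂ := fun h => by
        have h2 := congrArg Fin.val (hinj h); omega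
      have d3 : σ i₁ ≠ σ j₂ := fun h => by
        have h2 := congrArg Fin.val (hinj h); omega
      have hpy := hadj (σ i₁) (σ j₁) (σ j₂) d1 d2 d3 p hp1 hp2
      exact ⟨Or.inr hpy, Or.inl hpy⟩
  intro i₁ j₁ i₂ j₂ h₁ h₂ hne p hp
  rcases lt_trichotomy (i₁ : ℕ) (i₂ : ℕ) with h | h | h
  · exact half i₁ j₁ i₂ j₂ h₁ h₂ h p hp.1 hp.2
  · exact absurd (Fin.ext h) hne
  · exact (half i₂ j₂ i₁ j₁ h₂ h₁ h p hp.2 hp.1).symm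

lemma par (P : Fin n → ℝ × ℝ) (hinj : Function.Injective P)
    (hgen : ∀ i j k : Fin n, i ≠ j → j ≠ k → i ≠ k →
      ¬Collinear ℝ ({P i, P j, P k} : Set (ℝ × ℝ)))
    (a b c d : Fin n) (hab : a ≠ b) (hcd : c ≠ d)
    (hD : det2 (P b - P a) (P d - P c) = 0) :
    ∃ σ : Fin n → Fin n, Function.Bijective σ ∧
      (∀ i₁ j₁ i₂ j₂ : Fin n, (j₁ : ℕ) = (i₁ : ℕ) + 1 → (j₂ : ℕ) = (i₂ : ℕ) + 1 → i₁ ≠ i₂ →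
        ∀ p ∈ segment ℝ (P (σ i₁)) (P (σ j₁)) ∩ segment ℝ (P (σ i₂)) (P (σ j₂)),
          (p = P (σ i₁) ∨ p = P (σ j₁)) ∧ (p = P (σ i₂) ∨ p = P (σ j₂))) ∧
      (∃ i j : Fin n, (j : ℕ) = (i : ℕ) + 1 ∧ s(σ i, σ j) = s(a, b)) ∧
      (∃ i j : Fin n, (j : ℕ) = (i : ℕ) + 1 ∧ s(σ i, σ j) = s(c, d)) := by
  have hdet : ∀ i j k : Fin n, i ≠ j → j ≠ k → i ≠ k →
      det2 (P j - P i) (P k - P i) ≠ 0 :=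
    fun i j k h1 h2 h3 => det2_ne_of_not_collinear (hgen i j k h1 h2 h3)
  have hadjP : ∀ x y z : Fin n, x ≠ y → y ≠ z → x ≠ z →
      ∀ p : ℝ × ℝ, p ∈ segment ℝ (P x) (P y) → p ∈ segment ℝ (P y) (P z) → p = P y :=
    fun x y z h1 h2 h3 p hp1 hp2 =>
      adjacent_inter (hgen y x z (Ne.symm h1) h3 h2) hp1 hp2
  set u : ℝ × ℝ := P b - P a with hu_def
  have hu : u ≠ 0 := sub_ne_zero.mpr fun h => hab ((hinj h).symm)
  set f : Fin n → ℝ := fun p => det2 u (P p) with hf_def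
  have fdiff : ∀ x y : Fin n, f y - f x = det2 u (P y - P x) := by
    intro x y
    simp only [hf_def, det2, Prod.fst_sub, Prod.snd_sub]
    ring
  have fab : f a = f b := by
    have h1 : f b - f a = det2 u (P b - P a) := fdiff a b
    have h2 : det2 u u = 0 := by simp [det2]; ring
    rw [← hu_def] at h1
    linarith [h1, h2]
  have fcd : f c = f d := by
    have h1 : f d - f c = det2 u (P d - P c) := fdiff c d
    rw [hD] at h1
    linarith
  have tie3 : ∀ x y z : Fin n, x ≠ y → y ≠ z → x ≠ z → f x = f y → f x = f z → False := by
    intro x y z h1 h2 h3 e1 e2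
    have g1 : det2 u (P y - P x) = 0 := by rw [← fdiff]; linarith
    have g2 : det2 u (P z - P x) = 0 := by rw [← fdiff]; linarith
    obtain ⟨ρ, hρ⟩ := exists_smul_of_det2_eq_zero hu g1
    obtain ⟨τ, hτ⟩ := exists_smul_of_det2_eq_zero hu g2
    apply hdet x y z h1 h2 h3
    rw [hρ, hτ]
    simp [det2, Prod.smul_fst, Prod.smul_snd, smul_eq_mul]
    ring
  set K : Fin n → Lex (ℕ × Lex (ℝ × ℕ)) :=
    fun p => toLex ((0 : ℕ), toLex (f p, (p : ℕ))) with hK_def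
  obtain ⟨σ, hbij, hsm⟩ := exists_sorted_enum K (lexK_inj _ _)
  have hfle : ∀ i j : Fin n, i < j → f (σ i) ≤ f (σ j) := by
    intro i j hij
    have := hsm hij
    simp only [Function.comp_apply, hK_def] at this
    rcases (lexlt_iff _ _ _ _ _ _).mp this with h | ⟨_, h | ⟨h, _⟩⟩
    · exact absurd h (lt_irrefl _)
    · exact h.le
    · exact h.le
  have hdist : ∀ i j : Fin n, (i : ℕ) ≠ (j : ℕ) → σ i ≠ σ j := by
    intro i j hij h
    exact hij (congrArg Fin.val (hbij.injective h))
  have mkpair : ∀ x y : Fin n, x ≠ y → f x = f y →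
      ∃ i j : Fin n, (j : ℕ) = (i : ℕ) + 1 ∧ s(σ i, σ j) = s(x, y) := by
    have inner : ∀ x y : Fin n, x ≠ y → f x = f y → (x : ℕ) < (y : ℕ) →
        ∃ i j : Fin n, (j : ℕ) = (i : ℕ) + 1 ∧ s(σ i, σ j) = s(x, y) := by
      intro x y hxy hf hv
      have hKlt : K x < K y := by
        rw [hK_def]
        exact (lexlt_iff _ _ _ _ _ _).mpr (Or.inr ⟨rfl, Or.inr ⟨hf, hv⟩⟩)
      have hno : ∀ z : Fin n, z ≠ x → z ≠ y → ¬(K x < K z ∧ K z < K y) := by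
        intro z hzx hzy ⟨l1, l2⟩
        rw [hK_def] at l1 l2
        have e1 : f x ≤ f z := by
          rcases (lexlt_iff _ _ _ _ _ _).mp l1 with h | ⟨_, h | ⟨h, _⟩⟩
          · exact absurd h (lt_irrefl _)
          · exact h.le
          · exact h.le
        have e2 : f z ≤ f y := by
          rcases (lexlt_iff _ _ _ _ _ _).mp l2 with h | ⟨_, h | ⟨h, _⟩⟩
          · exact absurd h (lt_irrefl _)
          · exact h.le
          · exact h.le
        exact tie3 x y z hxy (Ne.symm hzy) (Ne.symm hzx) hf (by linarith)
      obtain ⟨i, j, hij, hsx, hsy⟩ :=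
        pair_adjacent_general hsm hbij.surjective x y hKlt hno
      exact ⟨i, j, hij, by rw [hsx, hsy]⟩
    intro x y hxy hf
    rcases lt_trichotomy (x : ℕ) (y : ℕ) with h | h | h
    · exact inner x y hxy hf h
    · exact absurd (Fin.ext h) hxy
    · obtain ⟨i, j, hij, he⟩ := inner y x (Ne.symm hxy) hf.symm h
      exact ⟨i, j, hij, he.trans (Sym2.eq_swap)⟩
  have hnonadj : ∀ t t1 m m1 : Fin n, (t1 : ℕ) = (t : ℕ) + 1 → (m1 : ℕ) = (m : ℕ) + 1 →
      ((t1 : ℕ) < (m : ℕ)) → ∀ p : ℝ × ℝ,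
      p ∈ segment ℝ (P (σ t)) (P (σ t1)) → p ∈ segment ℝ (P (σ m)) (P (σ m1)) → False := by
    intro t t1 m m1 ht hm hlt p hp1 hp2
    have o1 : t < t1 := by rw [Fin.lt_def]; omega
    have o2 : t1 < m := by rw [Fin.lt_def]; omega
    have o3 : m < m1 := by rw [Fin.lt_def]; omega
    have f12 : f (σ t) ≤ f (σ t1) := hfle _ _ o1
    have f23 : f (σ t1) ≤ f (σ m) := hfle _ _ o2
    have f34 : f (σ m) ≤ f (σ m1) := hfle _ _ o3
    set s : ℝ := (f (σ t1) + f (σ m)) / 2 with hs_def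
    set φ : ℝ × ℝ → ℝ := fun x => 1 * det2 u (x - ((0 : ℝ), (0 : ℝ))) + (-s) with hφ_def
    have hφP : ∀ p' : Fin n, φ (P p') = f p' - s := by
      intro p'
      simp only [hφ_def, hf_def, det2, Prod.fst_sub, Prod.snd_sub]
      ring
    have haff : ∀ (α β : ℝ) (x y : ℝ × ℝ), α + β = 1 → φ (α • x + β • y) = α * φ x + β * φ y :=
      fun α β x y h => aff_det2c 1 (-s) u ((0 : ℝ), (0 : ℝ)) α β x y h
    have hstr : φ (P (σ t)) < 0 ∨ φ (P (σ t1)) < 0 ∨ 0 < φ (P (σ m)) ∨ 0 < φ (P (σ m1)) := by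
      rcases lt_or_eq_of_le f23 with h | h
      · left; rw [hφP]; rw [hs_def]; linarith
      · rcases lt_or_eq_of_le f12 with h2 | h2
        · left; rw [hφP]; rw [hs_def]; linarith
        · exact (tie3 (σ t) (σ t1) (σ m)
            (hdist t t1 (by omega)) (hdist t1 m (by omega)) (hdist t m (by omega))
            h2 (h2.trans h)).elim
    refine master haff ?_ ?_ ?_ ?_ hstr ?_ ?_ ?_ ?_ hp1 hp2
    · rw [hφP]; rw [hs_def]; linarith
    · rw [hφP]; rw [hs_def]; linarith
    · rw [hφP]; rw [hs_def]; linarith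
    · rw [hφP]; rw [hs_def]; linarith
    · exact not_mem_segment (hgen (σ m) (σ m1) (σ t)
        (hdist m m1 (by omega)) (hdist m1 t (by omega)) (hdist m t (by omega)))
    · exact not_mem_segment (hgen (σ m) (σ m1) (σ t1)
        (hdist m m1 (by omega)) (hdist m1 t1 (by omega)) (hdist m t1 (by omega)))
    · exact not_mem_segment (hgen (σ t) (σ t1) (σ m)
        (hdist t t1 (by omega)) (hdist t1 m (by omega)) (hdist t m (by omega)))
    · exact not_mem_segment (hgen (σ t) (σ t1) (σ m1)
        (hdist t t1 (by omega)) (hdist t1 m1 (by omega)) (hdist t m1 (by omega)))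
  exact assemble P hadjP a b c d σ hbij hnonadj (mkpair a b hab fab) (mkpair c d hcd fcd)

lemma det2_self (v : ℝ × ℝ) : det2 v v = 0 := by simp [det2]; ring

lemma det2_smul_right (r : ℝ) (x y : ℝ × ℝ) : det2 x (r • y) = r * det2 x y := by
  simp [det2, Prod.smul_fst, Prod.smul_snd, smul_eq_mul]; ring

lemma dot2_smul_right (r : ℝ) (x y : ℝ × ℝ) : dot2 x (r • y) = r * dot2 x y := by
  simp [dot2, Prod.smul_fst, Prod.smul_snd, smul_eq_mul]; ring

lemma dot2_self_pos {v : ℝ × ℝ} (h : v ≠ 0) : 0 < dot2 v v := by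
  have h1 : v.1 ≠ 0 ∨ v.2 ≠ 0 := by
    by_contra hc
    push_neg at hc
    exact h (Prod.ext hc.1 hc.2)
  unfold dot2
  rcases h1 with h1 | h1
  · nlinarith [sq_nonneg v.2, mul_self_pos.mpr h1]
  · nlinarith [sq_nonneg v.1, mul_self_pos.mpr h1]

lemma det2_key (A v w : ℝ × ℝ) :
    det2 A v * dot2 A w - det2 A w * dot2 A v = -(dot2 A A * det2 v w) := by
  simp [det2, dot2]; ring

noncomputable def blockOfF {n : ℕ} (B : Fin n → ℝ) (p : Fin n) : ℕ :=
  if 0 < B p then 0 else if B p = 0 then 1 else 2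

noncomputable def keyrF {n : ℕ} (B κ : Fin n → ℝ) (a : Fin n) (μ : ℝ) (p : Fin n) : ℝ :=
  if B p = 0 then (if p = a then 0 else 1)
  else if 0 < B p then κ p else (if 0 < μ then κ p else -κ p)

section blockdec
variable {n : ℕ} {B κ : Fin n → ℝ} {a : Fin n} {μ : ℝ} {p : Fin n}

lemma blockOfF_zero (h : 0 < B p) : blockOfF B p = 0 := by simp [blockOfF, h]
lemma blockOfF_one (h : B p = 0) : blockOfF B p = 1 := by simp [blockOfF, h]
lemma blockOfF_two (h : B p < 0) : blockOfF B p = 2 := by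
  simp [blockOfF, not_lt.mpr h.le, h.ne]
lemma of_blockOfF_zero (h : blockOfF B p = 0) : 0 < B p := by
  by_contra hc
  rcases eq_or_lt_of_le (not_lt.mp hc) with h2 | h2
  · rw [blockOfF_one (by linarith : B p = 0)] at h; omega
  · rw [blockOfF_two h2] at h; omega
lemma of_blockOfF_one (h : blockOfF B p = 1) : B p = 0 := by
  rcases lt_trichotomy (B p) 0 with h2 | h2 | h2
  · rw [blockOfF_two h2] at h; omega
  · exact h2
  · rw [blockOfF_zero h2] at h; omega
lemma of_blockOfF_two (h : blockOfF B p = 2) : B p < 0 := by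
  rcases lt_trichotomy (B p) 0 with h2 | h2 | h2
  · exact h2
  · rw [blockOfF_one h2] at h; omega
  · rw [blockOfF_zero h2] at h; omega
lemma blockOfF_cases (B : Fin n → ℝ) (p : Fin n) :
    blockOfF B p = 0 ∨ blockOfF B p = 1 ∨ blockOfF B p = 2 := by
  rcases lt_trichotomy (B p) 0 with h | h | h
  · exact Or.inr (Or.inr (blockOfF_two h))
  · exact Or.inr (Or.inl (blockOfF_one h))
  · exact Or.inl (blockOfF_zero h)
lemma keyrF_pos (h : 0 < B p) : keyrF B κ a μ p = κ p := by
  simp [keyrF, h.ne', h]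
lemma keyrF_neg_pos (h : B p < 0) (hμ : 0 < μ) : keyrF B κ a μ p = κ p := by
  simp [keyrF, h.ne, not_lt.mpr h.le, hμ]
lemma keyrF_neg_neg (h : B p < 0) (hμ : μ < 0) : keyrF B κ a μ p = -κ p := by
  simp [keyrF, h.ne, not_lt.mpr h.le, not_lt.mpr hμ.le]
lemma keyrF_a (h : B a = 0) : keyrF B κ a μ a = 0 := by simp [keyrF, h]
lemma keyrF_b {b : Fin n} (h : B b = 0) (hba : b ≠ a) : keyrF B κ a μ b = 1 := by
  simp [keyrF, h, hba]
end blockdec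

set_option maxHeartbeats 2000000 in
lemma nonadj_main (P : Fin n → ℝ × ℝ)
    (hgen : ∀ i j k : Fin n, i ≠ j → j ≠ k → i ≠ k →
      ¬Collinear ℝ ({P i, P j, P k} : Set (ℝ × ℝ)))
    (σ : Fin n → Fin n)
    (hdist : ∀ i j : Fin n, (i : ℕ) ≠ (j : ℕ) → σ i ≠ σ j)
    (A q : ℝ × ℝ) (B κ : Fin n → ℝ) (μ : ℝ) (a b : Fin n) (hba' : b ≠ a)
    (hBfun : ∀ p' : Fin n, B p' = det2 A (P p' - q))
    (hκfun : ∀ p' : Fin n, κ p' = dot2 A (P p' - q) / B p')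
    (hBa : B a = 0) (hBb : B b = 0)
    (hBzero : ∀ p : Fin n, B p = 0 → p = a ∨ p = b)
    (hμ0 : μ ≠ 0) (hdotAA : 0 < dot2 A A)
    (hva : P a - q = A) (hvb : P b - q = μ • A)
    (tie3 : ∀ x y z : Fin n, x ≠ y → y ≠ z → x ≠ z →
      B x ≠ 0 → B y ≠ 0 → B z ≠ 0 → κ x = κ y → κ x = κ z → False)
    (hblk_mono : ∀ i j : Fin n, i < j → blockOfF B (σ i) ≤ blockOfF B (σ j))
    (hkey_mono : ∀ i j : Fin n, i < j → blockOfF B (σ i) = blockOfF B (σ j) →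
      keyrF B κ a μ (σ i) ≤ keyrF B κ a μ (σ j))
    (hab_pos : ∃ i j : Fin n, (j : ℕ) = (i : ℕ) + 1 ∧ σ i = a ∧ σ j = b)
    (hσa_next : ∀ i j : Fin n, (j : ℕ) = (i : ℕ) + 1 → σ i = a → σ j = b)
    (hσb_prev : ∀ i j : Fin n, (j : ℕ) = (i : ℕ) + 1 → σ j = b → σ i = a) :
    ∀ t' t1 m m1 : Fin n, (t1 : ℕ) = (t' : ℕ) + 1 → (m1 : ℕ) = (m : ℕ) + 1 →
      ((t1 : ℕ) < (m : ℕ)) → ∀ p : ℝ × ℝ,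
      p ∈ segment ℝ (P (σ t')) (P (σ t1)) → p ∈ segment ℝ (P (σ m)) (P (σ m1)) → False := by
  set bl : Fin n → ℕ := blockOfF B with hbl_def
  set ky : Fin n → ℝ := keyrF B κ a μ with hky_def
  intro t' t1 m m1 ht hm hlt p hp1 hp2
  have o1 : t' < t1 := by rw [Fin.lt_def]; omega
  have o2 : t1 < m := by rw [Fin.lt_def]; omega
  have o3 : m < m1 := by rw [Fin.lt_def]; omega
  have NM : ∀ i j k : Fin n, (i : ℕ) ≠ (j : ℕ) → (j : ℕ) ≠ (k : ℕ) → (i : ℕ) ≠ (k : ℕ) →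
      P (σ k) ∉ segment ℝ (P (σ i)) (P (σ j)) :=
    fun i j k h1 h2 h3 =>
      not_mem_segment (hgen (σ i) (σ j) (σ k) (hdist _ _ h1) (hdist _ _ h2) (hdist _ _ h3))
  have hC1 : P (σ t') ∉ segment ℝ (P (σ m)) (P (σ m1)) :=
    NM m m1 t' (by omega) (by omega) (by omega)
  have hC2 : P (σ t1) ∉ segment ℝ (P (σ m)) (P (σ m1)) :=
    NM m m1 t1 (by omega) (by omega) (by omega)
  have hC3 : P (σ m) ∉ segment ℝ (P (σ t')) (P (σ t1)) :=
    NM t' t1 m (by omega) (by omega) (by omega)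
  have hC4 : P (σ m1) ∉ segment ℝ (P (σ t')) (P (σ t1)) :=
    NM t' t1 m1 (by omega) (by omega) (by omega)
  have hφB : ∀ s : ℝ, ∀ p' : Fin n, B p' ≠ 0 →
      s * det2 A (P p' - q) - dot2 A (P p' - q) = B p' * (s - κ p') := by
    intro s p' hB
    have hB' : det2 A (P p' - q) ≠ 0 := by rw [← hBfun]; exact hB
    rw [hκfun p', hBfun p']
    field_simp
  have hφa : ∀ s : ℝ, s * det2 A (P a - q) - dot2 A (P a - q) = -dot2 A A := by
    intro s
    rw [hva, det2_self]; ring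
  have hφb : ∀ s : ℝ, s * det2 A (P b - q) - dot2 A (P b - q) = -(μ * dot2 A A) := by
    intro s
    rw [hvb, det2_smul_right, dot2_smul_right, det2_self]; ring
  have hψB : ∀ p' : Fin n, (-1 : ℝ) * det2 A (P p' - q) + 0 = -(B p') := by
    intro p'
    rw [hBfun p']
    ring
  have hψa : (-1 : ℝ) * det2 A (P a - q) + 0 = 0 := by rw [hva, det2_self]; ring
  have hψb : (-1 : ℝ) * det2 A (P b - q) + 0 = 0 := by
    rw [hvb, det2_smul_right, det2_self]; ring
  have hof0 : ∀ p' : Fin n, bl p' = 0 → 0 < B p' := by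
    intro p' h; rw [hbl_def] at h; exact of_blockOfF_zero h
  have hof1 : ∀ p' : Fin n, bl p' = 1 → B p' = 0 := by
    intro p' h; rw [hbl_def] at h; exact of_blockOfF_one h
  have hof2 : ∀ p' : Fin n, bl p' = 2 → B p' < 0 := by
    intro p' h; rw [hbl_def] at h; exact of_blockOfF_two h
  have hcases : ∀ p' : Fin n, bl p' = 0 ∨ bl p' = 1 ∨ bl p' = 2 := by
    intro p'; rw [hbl_def]; exact blockOfF_cases B p'
  have hbla : bl a = 1 := by rw [hbl_def]; exact blockOfF_one hBa
  have hblb : bl b = 1 := by rw [hbl_def]; exact blockOfF_one hBb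
  have hκ0 : ∀ i j : Fin n, i < j → bl (σ i) = 0 → bl (σ j) = 0 → κ (σ i) ≤ κ (σ j) := by
    intro i j hij h1 h2
    have h3 := hkey_mono i j hij (by rw [h1, h2])
    rw [hky_def] at h3
    rwa [keyrF_pos (hof0 _ h1), keyrF_pos (hof0 _ h2)] at h3
  have hκ2p : 0 < μ → ∀ i j : Fin n, i < j → bl (σ i) = 2 → bl (σ j) = 2 →
      κ (σ i) ≤ κ (σ j) := by
    intro hμ i j hij h1 h2
    have h3 := hkey_mono i j hij (by rw [h1, h2])
    rw [hky_def] at h3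
    rwa [keyrF_neg_pos (hof2 _ h1) hμ, keyrF_neg_pos (hof2 _ h2) hμ] at h3
  have hκ2n : μ < 0 → ∀ i j : Fin n, i < j → bl (σ i) = 2 → bl (σ j) = 2 →
      κ (σ j) ≤ κ (σ i) := by
    intro hμ i j hij h1 h2
    have h3 := hkey_mono i j hij (by rw [h1, h2])
    rw [hky_def] at h3
    rw [keyrF_neg_neg (hof2 _ h1) hμ, keyrF_neg_neg (hof2 _ h2) hμ] at h3
    linarith
  have jump : ∀ i j : Fin n, (j : ℕ) = (i : ℕ) + 1 → bl (σ i) = 0 → bl (σ j) = 2 → False := by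
    intro i j hij h0 h2
    obtain ⟨ia', ja', hija', hsa', hsb'⟩ := hab_pos
    have h1a : bl (σ ia') = 1 := by rw [hsa']; exact hbla
    have e1 : i < ia' := by
      rcases lt_trichotomy ia' i with h | h | h
      · have := hblk_mono ia' i h; omega
      · subst h; omega
      · exact h
    have e2 : ia' < j := by
      rcases lt_trichotomy ia' j with h | h | h
      · exact h
      · subst h; omega
      · have := hblk_mono j ia' h; omega
    rw [Fin.lt_def] at e1 e2
    omega
  have id2 : ∀ i j : Fin n, i < j → bl (σ i) = 1 → bl (σ j) = 1 → σ i = a ∧ σ j = b := by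
    intro i j hij h1 h2
    have hvne : (i : ℕ) ≠ (j : ℕ) := by rw [Fin.lt_def] at hij; omega
    rcases hBzero _ (hof1 _ h1) with hi | hi
    · rcases hBzero _ (hof1 _ h2) with hj | hj
      · exact absurd (hi.trans hj.symm) (hdist i j hvne)
      · exact ⟨hi, hj⟩
    · have h3 := hkey_mono i j hij (by rw [h1, h2])
      rcases hBzero _ (hof1 _ h2) with hj | hj
      · rw [hi, hj, hky_def] at h3
        rw [keyrF_b hBb hba', keyrF_a hBa] at h3
        norm_num at h3
      · exact absurd (hi.trans hj.symm) (hdist i j hvne)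
  -- case analysis on the block pattern
  rcases hcases (σ t') with b0 | b0 | b0
  · rcases hcases (σ t1) with b1 | b1 | b1
    · rcases hcases (σ m) with b2 | b2 | b2
      · rcases hcases (σ m1) with b3 | b3 | b3
        · -- P0000
          have B0 := hof0 _ b0
          have B1 := hof0 _ b1
          have B2 := hof0 _ b2
          have B3 := hof0 _ b3
          have k01 : κ (σ t') ≤ κ (σ t1) := hκ0 _ _ o1 b0 b1
          have k12 : κ (σ t1) ≤ κ (σ m) := hκ0 _ _ o2 b1 b2
          have k23 : κ (σ m) ≤ κ (σ m1) := hκ0 _ _ o3 b2 b3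
          set s : ℝ := (κ (σ t1) + κ (σ m)) / 2 with hs_def
          refine master (φ := fun x => s * det2 A (x - q) - dot2 A (x - q))
            (fun α β x y h => aff_phis s A q α β x y h)
            ?_ ?_ ?_ ?_ ?_ hC3 hC4 hC1 hC2 hp2 hp1
          · beta_reduce; rw [hφB s _ B2.ne']; nlinarith
          · beta_reduce; rw [hφB s _ B3.ne']; nlinarith
          · beta_reduce; rw [hφB s _ B0.ne']; nlinarith
          · beta_reduce; rw [hφB s _ B1.ne']; nlinarith
          · rcases lt_or_eq_of_le k12 with hk | hk
            · right; right; right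
              beta_reduce; rw [hφB s _ B1.ne']
              nlinarith
            · rcases lt_or_eq_of_le k01 with hk2 | hk2
              · right; right; left
                beta_reduce; rw [hφB s _ B0.ne']
                nlinarith
              · exact (tie3 (σ t') (σ t1) (σ m)
                  (hdist t' t1 (by omega)) (hdist t1 m (by omega)) (hdist t' m (by omega))
                  B0.ne' B1.ne' B2.ne' hk2 (hk2.trans hk)).elim
        · -- P0001
          have hma : σ m1 = a := by
            rcases hBzero _ (hof1 _ b3) with hma | hmb
            · exact hma
            · have h4 := hσb_prev m m1 hm hmb
              rw [h4, hbla] at b2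
              omega
          have B0 := hof0 _ b0
          have B1 := hof0 _ b1
          have B2 := hof0 _ b2
          have k01 : κ (σ t') ≤ κ (σ t1) := hκ0 _ _ o1 b0 b1
          have k12 : κ (σ t1) ≤ κ (σ m) := hκ0 _ _ o2 b1 b2
          set s : ℝ := (κ (σ t1) + κ (σ m)) / 2 with hs_def
          refine master (φ := fun x => s * det2 A (x - q) - dot2 A (x - q))
            (fun α β x y h => aff_phis s A q α β x y h)
            ?_ ?_ ?_ ?_ ?_ hC3 hC4 hC1 hC2 hp2 hp1
          · beta_reduce; rw [hφB s _ B2.ne']; nlinarith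
          · beta_reduce; rw [hma, hφa s]; linarith
          · beta_reduce; rw [hφB s _ B0.ne']; nlinarith
          · beta_reduce; rw [hφB s _ B1.ne']; nlinarith
          · right; left
            beta_reduce; rw [hma, hφa s]; linarith
        · exact jump m m1 hm b2 b3
      · rcases hcases (σ m1) with b3 | b3 | b3
        · have := hblk_mono m m1 o3; omega
        · -- P0011
          obtain ⟨hma, hmb⟩ := id2 m m1 o3 b2 b3
          have B0 := hof0 _ b0
          have B1 := hof0 _ b1
          refine master (φ := fun x => (-1 : ℝ) * det2 A (x - q) + 0)
            (fun α β x y h => aff_det2c (-1) 0 A q α β x y h)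
            ?_ ?_ ?_ ?_ ?_ hC1 hC2 hC3 hC4 hp1 hp2
          · beta_reduce; rw [hψB]; linarith
          · beta_reduce; rw [hψB]; linarith
          · beta_reduce; rw [hma, hψa]
          · beta_reduce; rw [hmb, hψb]
          · left; beta_reduce; rw [hψB]; linarith
        · -- P0012
          have hmb : σ m = b := by
            rcases hBzero _ (hof1 _ b2) with hma | hmb
            · have h4 := hσa_next m m1 hm hma
              rw [h4, hblb] at b3
              omega
            · exact hmb
          have B0 := hof0 _ b0
          have B1 := hof0 _ b1
          have B3 := hof2 _ b3
          have k01 : κ (σ t') ≤ κ (σ t1) := hκ0 _ _ o1 b0 b1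
          rcases hμ0.lt_or_gt with hμn | hμp
          · -- μ < 0
            set s : ℝ := min (κ (σ t')) (κ (σ m1)) - 1 with hs_def
            have hs0 : s < κ (σ t') := by
              rw [hs_def]; have := min_le_left (κ (σ t')) (κ (σ m1)); linarith
            have hs3 : s < κ (σ m1) := by
              rw [hs_def]; have := min_le_right (κ (σ t')) (κ (σ m1)); linarith
            refine master (φ := fun x => s * det2 A (x - q) - dot2 A (x - q))
              (fun α β x y h => aff_phis s A q α β x y h)
              ?_ ?_ ?_ ?_ ?_ hC1 hC2 hC3 hC4 hp1 hp2
            · beta_reduce; rw [hφB s _ B0.ne']; nlinarith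
            · beta_reduce; rw [hφB s _ B1.ne']; nlinarith
            · beta_reduce; rw [hmb, hφb s]; nlinarith
            · beta_reduce; rw [hφB s _ B3.ne]; nlinarith
            · left; beta_reduce; rw [hφB s _ B0.ne']; nlinarith
          · -- 0 < μ
            set s : ℝ := max (κ (σ t1)) (κ (σ m1)) + 1 with hs_def
            have hs1 : κ (σ t1) < s := by
              rw [hs_def]; have := le_max_left (κ (σ t1)) (κ (σ m1)); linarith
            have hs3 : κ (σ m1) < s := by
              rw [hs_def]; have := le_max_right (κ (σ t1)) (κ (σ m1)); linarith
            refine master (φ := fun x => s * det2 A (x - q) - dot2 A (x - q))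
              (fun α β x y h => aff_phis s A q α β x y h)
              ?_ ?_ ?_ ?_ ?_ hC3 hC4 hC1 hC2 hp2 hp1
            · beta_reduce; rw [hmb, hφb s]; nlinarith
            · beta_reduce; rw [hφB s _ B3.ne]; nlinarith
            · beta_reduce; rw [hφB s _ B0.ne']; nlinarith
            · beta_reduce; rw [hφB s _ B1.ne']; nlinarith
            · left; beta_reduce; rw [hmb, hφb s]; nlinarith
      · rcases hcases (σ m1) with b3 | b3 | b3
        · have := hblk_mono m m1 o3; omega
        · have := hblk_mono m m1 o3; omega
        · -- P0022
          have B0 := hof0 _ b0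
          have B1 := hof0 _ b1
          have B2 := hof2 _ b2
          have B3 := hof2 _ b3
          have k01 : κ (σ t') ≤ κ (σ t1) := hκ0 _ _ o1 b0 b1
          rcases hμ0.lt_or_gt with hμn | hμp
          · set s : ℝ := min (κ (σ t')) (min (κ (σ m)) (κ (σ m1))) - 1 with hs_def
            have hs0 : s < κ (σ t') := by
              rw [hs_def]; have := min_le_left (κ (σ t')) (min (κ (σ m)) (κ (σ m1))); linarith
            have hs2 : s < κ (σ m) := by
              rw [hs_def]
              have h5 := min_le_right (κ (σ t')) (min (κ (σ m)) (κ (σ m1)))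
              have h6 := min_le_left (κ (σ m)) (κ (σ m1))
              linarith
            have hs3 : s < κ (σ m1) := by
              rw [hs_def]
              have h5 := min_le_right (κ (σ t')) (min (κ (σ m)) (κ (σ m1)))
              have h6 := min_le_right (κ (σ m)) (κ (σ m1))
              linarith
            refine master (φ := fun x => s * det2 A (x - q) - dot2 A (x - q))
              (fun α β x y h => aff_phis s A q α β x y h)
              ?_ ?_ ?_ ?_ ?_ hC1 hC2 hC3 hC4 hp1 hp2
            · beta_reduce; rw [hφB s _ B0.ne']; nlinarith
            · beta_reduce; rw [hφB s _ B1.ne']; nlinarith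
            · beta_reduce; rw [hφB s _ B2.ne]; nlinarith
            · beta_reduce; rw [hφB s _ B3.ne]; nlinarith
            · left; beta_reduce; rw [hφB s _ B0.ne']; nlinarith
          · set s : ℝ := max (κ (σ t1)) (max (κ (σ m)) (κ (σ m1))) + 1 with hs_def
            have hs1 : κ (σ t1) < s := by
              rw [hs_def]; have := le_max_left (κ (σ t1)) (max (κ (σ m)) (κ (σ m1))); linarith
            have hs2 : κ (σ m) < s := by
              rw [hs_def]
              have h5 := le_max_right (κ (σ t1)) (max (κ (σ m)) (κ (σ m1)))
              have h6 := le_max_left (κ (σ m)) (κ (σ m1))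
              linarith
            have hs3 : κ (σ m1) < s := by
              rw [hs_def]
              have h5 := le_max_right (κ (σ t1)) (max (κ (σ m)) (κ (σ m1)))
              have h6 := le_max_right (κ (σ m)) (κ (σ m1))
              linarith
            refine master (φ := fun x => s * det2 A (x - q) - dot2 A (x - q))
              (fun α β x y h => aff_phis s A q α β x y h)
              ?_ ?_ ?_ ?_ ?_ hC3 hC4 hC1 hC2 hp2 hp1
            · beta_reduce; rw [hφB s _ B2.ne]; nlinarith
            · beta_reduce; rw [hφB s _ B3.ne]; nlinarith
            · beta_reduce; rw [hφB s _ B0.ne']; nlinarith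
            · beta_reduce; rw [hφB s _ B1.ne']; nlinarith
            · left; beta_reduce; rw [hφB s _ B2.ne]; nlinarith
    · -- b1 = 1
      rcases hcases (σ m) with b2 | b2 | b2
      · have := hblk_mono t1 m o2; omega
      · -- P0112
        obtain ⟨hta, hmb⟩ := id2 t1 m o2 b1 b2
        have B0 := hof0 _ b0
        rcases hcases (σ m1) with b3 | b3 | b3
        · have := hblk_mono m m1 o3; omega
        · rcases hBzero _ (hof1 _ b3) with h4 | h4
          · exact absurd (hta.trans h4.symm) (hdist t1 m1 (by omega))
          · exact absurd (hmb.trans h4.symm) (hdist m m1 (by omega))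
        · have B3 := hof2 _ b3
          refine master (φ := fun x => (-1 : ℝ) * det2 A (x - q) + 0)
            (fun α β x y h => aff_det2c (-1) 0 A q α β x y h)
            ?_ ?_ ?_ ?_ ?_ hC1 hC2 hC3 hC4 hp1 hp2
          · beta_reduce; rw [hψB]; linarith
          · beta_reduce; rw [hta, hψa]
          · beta_reduce; rw [hmb, hψb]
          · beta_reduce; rw [hψB]; linarith
          · left; beta_reduce; rw [hψB]; linarith
      · -- P0122
        have hta : σ t1 = a := by
          rcases hBzero _ (hof1 _ b1) with h4 | h4
          · exact h4
          · have h5 := hσb_prev t' t1 ht h4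
            rw [h5, hbla] at b0
            omega
        have B0 := hof0 _ b0
        have B2 := hof2 _ b2
        rcases hcases (σ m1) with b3 | b3 | b3
        · have := hblk_mono m m1 o3; omega
        · have := hblk_mono m m1 o3; omega
        · have B3 := hof2 _ b3
          set s : ℝ := min (κ (σ t')) (min (κ (σ m)) (κ (σ m1))) - 1 with hs_def
          have hs0 : s < κ (σ t') := by
            rw [hs_def]; have := min_le_left (κ (σ t')) (min (κ (σ m)) (κ (σ m1))); linarith
          have hs2 : s < κ (σ m) := by
            rw [hs_def]
            have h5 := min_le_right (κ (σ t')) (min (κ (σ m)) (κ (σ m1)))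
            have h6 := min_le_left (κ (σ m)) (κ (σ m1))
            linarith
          have hs3 : s < κ (σ m1) := by
            rw [hs_def]
            have h5 := min_le_right (κ (σ t')) (min (κ (σ m)) (κ (σ m1)))
            have h6 := min_le_right (κ (σ m)) (κ (σ m1))
            linarith
          refine master (φ := fun x => s * det2 A (x - q) - dot2 A (x - q))
            (fun α β x y h => aff_phis s A q α β x y h)
            ?_ ?_ ?_ ?_ ?_ hC1 hC2 hC3 hC4 hp1 hp2
          · beta_reduce; rw [hφB s _ B0.ne']; nlinarith
          · beta_reduce; rw [hta, hφa s]; linarith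
          · beta_reduce; rw [hφB s _ B2.ne]; nlinarith
          · beta_reduce; rw [hφB s _ B3.ne]; nlinarith
          · left; beta_reduce; rw [hφB s _ B0.ne']; nlinarith
    · exact jump t' t1 ht b0 b1
  · -- b0 = 1
    rcases hcases (σ t1) with b1 | b1 | b1
    · have := hblk_mono t' t1 o1; omega
    · -- σ t' = a, σ t1 = b
      obtain ⟨hta, htb⟩ := id2 t' t1 o1 b0 b1
      rcases hcases (σ m) with b2 | b2 | b2
      · have := hblk_mono t1 m o2; omega
      · rcases hBzero _ (hof1 _ b2) with h4 | h4
        · exact absurd (hta.trans h4.symm) (hdist t' m (by omega))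
        · exact absurd (htb.trans h4.symm) (hdist t1 m (by omega))
      · rcases hcases (σ m1) with b3 | b3 | b3
        · have := hblk_mono m m1 o3; omega
        · have := hblk_mono m m1 o3; omega
        · -- P1122
          have B2 := hof2 _ b2
          have B3 := hof2 _ b3
          refine master (φ := fun x => (-1 : ℝ) * det2 A (x - q) + 0)
            (fun α β x y h => aff_det2c (-1) 0 A q α β x y h)
            ?_ ?_ ?_ ?_ ?_ hC1 hC2 hC3 hC4 hp1 hp2
          · beta_reduce; rw [hta, hψa]
          · beta_reduce; rw [htb, hψb]
          · beta_reduce; rw [hψB]; linarith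
          · beta_reduce; rw [hψB]; linarith
          · right; right; left; beta_reduce; rw [hψB]; linarith
    · -- b1 = 2 : P1222, σ t' = b
      have htb : σ t' = b := by
        rcases hBzero _ (hof1 _ b0) with h4 | h4
        · have h5 := hσa_next t' t1 ht h4
          rw [h5, hblb] at b1
          omega
        · exact h4
      have b2 : bl (σ m) = 2 := by
        have h4 := hblk_mono t1 m o2
        rcases hcases (σ m) with h5 | h5 | h5 <;> omega
      have b3 : bl (σ m1) = 2 := by
        have h4 := hblk_mono m m1 o3
        rcases hcases (σ m1) with h5 | h5 | h5 <;> omega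
      have B1 := hof2 _ b1
      have B2 := hof2 _ b2
      have B3 := hof2 _ b3
      rcases hμ0.lt_or_gt with hμn | hμp
      · have k12 : κ (σ m) ≤ κ (σ t1) := hκ2n hμn _ _ o2 b1 b2
        have k23 : κ (σ m1) ≤ κ (σ m) := hκ2n hμn _ _ o3 b2 b3
        set s : ℝ := (κ (σ t1) + κ (σ m)) / 2 with hs_def
        refine master (φ := fun x => s * det2 A (x - q) - dot2 A (x - q))
          (fun α β x y h => aff_phis s A q α β x y h)
          ?_ ?_ ?_ ?_ ?_ hC3 hC4 hC1 hC2 hp2 hp1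
        · beta_reduce; rw [hφB s _ B2.ne]; nlinarith
        · beta_reduce; rw [hφB s _ B3.ne]; nlinarith
        · beta_reduce; rw [htb, hφb s]; nlinarith
        · beta_reduce; rw [hφB s _ B1.ne]; nlinarith
        · right; right; left
          beta_reduce; rw [htb, hφb s]; nlinarith
      · have k12 : κ (σ t1) ≤ κ (σ m) := hκ2p hμp _ _ o2 b1 b2
        have k23 : κ (σ m) ≤ κ (σ m1) := hκ2p hμp _ _ o3 b2 b3
        set s : ℝ := (κ (σ t1) + κ (σ m)) / 2 with hs_def
        refine master (φ := fun x => s * det2 A (x - q) - dot2 A (x - q))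
          (fun α β x y h => aff_phis s A q α β x y h)
          ?_ ?_ ?_ ?_ ?_ hC1 hC2 hC3 hC4 hp1 hp2
        · beta_reduce; rw [htb, hφb s]; nlinarith
        · beta_reduce; rw [hφB s _ B1.ne]; nlinarith
        · beta_reduce; rw [hφB s _ B2.ne]; nlinarith
        · beta_reduce; rw [hφB s _ B3.ne]; nlinarith
        · left
          beta_reduce; rw [htb, hφb s]; nlinarith
  · -- b0 = 2 : everything in block 2
    have b1 : bl (σ t1) = 2 := by
      have h4 := hblk_mono t' t1 o1
      rcases hcases (σ t1) with h5 | h5 | h5 <;> omega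
    have b2 : bl (σ m) = 2 := by
      have h4 := hblk_mono t1 m o2
      rcases hcases (σ m) with h5 | h5 | h5 <;> omega
    have b3 : bl (σ m1) = 2 := by
      have h4 := hblk_mono m m1 o3
      rcases hcases (σ m1) with h5 | h5 | h5 <;> omega
    -- P2222
    have B0 := hof2 _ b0
    have B1 := hof2 _ b1
    have B2 := hof2 _ b2
    have B3 := hof2 _ b3
    rcases hμ0.lt_or_gt with hμn | hμp
    · have k01 : κ (σ t1) ≤ κ (σ t') := hκ2n hμn _ _ o1 b0 b1
      have k12 : κ (σ m) ≤ κ (σ t1) := hκ2n hμn _ _ o2 b1 b2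
      have k23 : κ (σ m1) ≤ κ (σ m) := hκ2n hμn _ _ o3 b2 b3
      set s : ℝ := (κ (σ t1) + κ (σ m)) / 2 with hs_def
      refine master (φ := fun x => s * det2 A (x - q) - dot2 A (x - q))
        (fun α β x y h => aff_phis s A q α β x y h)
        ?_ ?_ ?_ ?_ ?_ hC3 hC4 hC1 hC2 hp2 hp1
      · beta_reduce; rw [hφB s _ B2.ne]; nlinarith
      · beta_reduce; rw [hφB s _ B3.ne]; nlinarith
      · beta_reduce; rw [hφB s _ B0.ne]; nlinarith
      · beta_reduce; rw [hφB s _ B1.ne]; nlinarith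
      · rcases lt_or_eq_of_le k12 with hk | hk
        · left
          beta_reduce; rw [hφB s _ B2.ne]
          nlinarith
        · rcases lt_or_eq_of_le k23 with hk2 | hk2
          · right; left
            beta_reduce; rw [hφB s _ B3.ne]
            nlinarith
          · exact (tie3 (σ t1) (σ m) (σ m1)
              (hdist t1 m (by omega)) (hdist m m1 (by omega)) (hdist t1 m1 (by omega))
              B1.ne B2.ne B3.ne hk.symm (hk.symm.trans hk2.symm)).elim
    · have k01 : κ (σ t') ≤ κ (σ t1) := hκ2p hμp _ _ o1 b0 b1
      have k12 : κ (σ t1) ≤ κ (σ m) := hκ2p hμp _ _ o2 b1 b2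
      have k23 : κ (σ m) ≤ κ (σ m1) := hκ2p hμp _ _ o3 b2 b3
      set s : ℝ := (κ (σ t1) + κ (σ m)) / 2 with hs_def
      refine master (φ := fun x => s * det2 A (x - q) - dot2 A (x - q))
        (fun α β x y h => aff_phis s A q α β x y h)
        ?_ ?_ ?_ ?_ ?_ hC1 hC2 hC3 hC4 hp1 hp2
      · beta_reduce; rw [hφB s _ B0.ne]; nlinarith
      · beta_reduce; rw [hφB s _ B1.ne]; nlinarith
      · beta_reduce; rw [hφB s _ B2.ne]; nlinarith
      · beta_reduce; rw [hφB s _ B3.ne]; nlinarith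
      · rcases lt_or_eq_of_le k12 with hk | hk
        · right; left
          beta_reduce; rw [hφB s _ B1.ne]
          nlinarith
        · rcases lt_or_eq_of_le k01 with hk2 | hk2
          · left
            beta_reduce; rw [hφB s _ B0.ne]
            nlinarith
          · exact (tie3 (σ t') (σ t1) (σ m)
              (hdist t' t1 (by omega)) (hdist t1 m (by omega)) (hdist t' m (by omega))
              B0.ne B1.ne B2.ne hk2 (hk2.trans hk)).elim


set_option maxHeartbeats 800000 in
lemma aux (P : Fin n → ℝ × ℝ) (hinj : Function.Injective P)
    (hgen : ∀ i j k : Fin n, i ≠ j → j ≠ k → i ≠ k →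
      ¬Collinear ℝ ({P i, P j, P k} : Set (ℝ × ℝ)))
    (a b c d : Fin n) (hab : a ≠ b) (hcd : c ≠ d)
    (hac : a ≠ c) (had : a ≠ d) (hbc : b ≠ c) (hbd : b ≠ d)
    (hD : det2 (P b - P a) (P d - P c) ≠ 0)
    (hr : det2 (P c - P a) (P b - P a) / det2 (P b - P a) (P d - P c) < 0 ∨
          1 < det2 (P c - P a) (P b - P a) / det2 (P b - P a) (P d - P c)) :
    ∃ σ : Fin n → Fin n, Function.Bijective σ ∧
      (∀ i₁ j₁ i₂ j₂ : Fin n, (j₁ : ℕ) = (i₁ : ℕ) + 1 → (j₂ : ℕ) = (i₂ : ℕ) + 1 → i₁ ≠ i₂ →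
        ∀ p ∈ segment ℝ (P (σ i₁)) (P (σ j₁)) ∩ segment ℝ (P (σ i₂)) (P (σ j₂)),
          (p = P (σ i₁) ∨ p = P (σ j₁)) ∧ (p = P (σ i₂) ∨ p = P (σ j₂))) ∧
      (∃ i j : Fin n, (j : ℕ) = (i : ℕ) + 1 ∧ s(σ i, σ j) = s(a, b)) ∧
      (∃ i j : Fin n, (j : ℕ) = (i : ℕ) + 1 ∧ s(σ i, σ j) = s(c, d)) := by
  have hdet : ∀ i j k : Fin n, i ≠ j → j ≠ k → i ≠ k →
      det2 (P j - P i) (P k - P i) ≠ 0 :=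
    fun i j k h1 h2 h3 => det2_ne_of_not_collinear (hgen i j k h1 h2 h3)
  have hadjP : ∀ x y z : Fin n, x ≠ y → y ≠ z → x ≠ z →
      ∀ p : ℝ × ℝ, p ∈ segment ℝ (P x) (P y) → p ∈ segment ℝ (P y) (P z) → p = P y :=
    fun x y z h1 h2 h3 p hp1 hp2 =>
      adjacent_inter (hgen y x z (Ne.symm h1) h3 h2) hp1 hp2
  set u : ℝ × ℝ := P b - P a with hu_def
  set w : ℝ × ℝ := P d - P c with hw_def
  have hu : u ≠ 0 := sub_ne_zero.mpr fun h => hab ((hinj h).symm)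
  set D : ℝ := det2 u w with hD_def
  set t : ℝ := det2 (P c - P a) w / D with ht_def
  set r : ℝ := det2 (P c - P a) u / D with hr_def
  set q : ℝ × ℝ := P a + t • u with hq_def
  -- q is also on line cd
  have hts : t * D = det2 (P c - P a) w := by rw [ht_def]; field_simp
  have hrs : r * D = det2 (P c - P a) u := by rw [hr_def]; field_simp
  have hq2 : q - P c = r • w := by
    apply Prod.ext
    · apply mul_left_cancel₀ hD
      have e1 : D * ((q - P c).1) = D * ((P a).1 - (P c).1) + (t * D) * u.1 := by
        simp only [hq_def, Prod.fst_add, Prod.fst_sub, Prod.smul_fst, smul_eq_mul]; ring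
      have e2 : D * ((r • w).1) = (r * D) * w.1 := by
        simp only [Prod.smul_fst, smul_eq_mul]; ring
      rw [e1, e2, hts, hrs]
      simp only [hD_def, hu_def, hw_def, det2, Prod.fst_sub, Prod.snd_sub]
      ring
    · apply mul_left_cancel₀ hD
      have e1 : D * ((q - P c).2) = D * ((P a).2 - (P c).2) + (t * D) * u.2 := by
        simp only [hq_def, Prod.snd_add, Prod.snd_sub, Prod.smul_snd, smul_eq_mul]; ring
      have e2 : D * ((r • w).2) = (r * D) * w.2 := by
        simp only [Prod.smul_snd, smul_eq_mul]; ring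
      rw [e1, e2, hts, hrs]
      simp only [hD_def, hu_def, hw_def, det2, Prod.fst_sub, Prod.snd_sub]
      ring
  -- nonzero parameters
  have ht0 : t ≠ 0 := by
    have h1 : det2 (P c - P a) w = det2 (P d - P c) (P a - P c) := by
      simp only [hw_def, det2, Prod.fst_sub, Prod.snd_sub]; ring
    rw [ht_def, h1]
    exact div_ne_zero (hdet c d a hcd had.symm hac.symm) hD
  have ht1 : t ≠ 1 := by
    intro h
    have h1 : det2 (P c - P a) w = D := by rw [← hts, h]; ring
    have h2 : det2 (P d - P c) (P b - P c) = det2 (P c - P a) w - D := by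
      simp only [hD_def, hu_def, hw_def, det2, Prod.fst_sub, Prod.snd_sub]; ring
    rw [h1] at h2
    simp at h2
    exact hdet c d b hcd hbd.symm hbc.symm h2
  have hr0 : r ≠ 0 := by
    have h1 : det2 (P c - P a) u = -det2 (P b - P a) (P c - P a) := by
      simp only [hu_def, det2, Prod.fst_sub, Prod.snd_sub]; ring
    rw [hr_def, h1]
    exact div_ne_zero (neg_ne_zero.mpr (hdet a b c hab hbc hac)) hD
  have hr1 : r ≠ 1 := by
    intro h
    have h1 : det2 (P c - P a) u = D := by rw [← hrs, h]; ring
    have h2 : det2 (P b - P a) (P d - P a) = D - det2 (P c - P a) u := by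
      simp only [hD_def, hu_def, hw_def, det2, Prod.fst_sub, Prod.snd_sub]; ring
    rw [h1] at h2
    simp at h2
    exact hdet a b d hab hbd had h2
  set A : ℝ × ℝ := P a - q with hA_def
  have hA_eq : A = (-t) • u := by
    rw [hA_def, hq_def]
    apply Prod.ext <;>
      simp [Prod.fst_add, Prod.snd_add, Prod.fst_sub, Prod.snd_sub,
        Prod.smul_fst, Prod.smul_snd, smul_eq_mul] <;> ring
  have hA0 : A ≠ 0 := by
    rw [hA_eq]
    exact smul_ne_zero (neg_ne_zero.mpr ht0) hu
  set B : Fin n → ℝ := fun p => det2 A (P p - q) with hB_def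
  set κ : Fin n → ℝ := fun p => dot2 A (P p - q) / B p with hκ_def
  set μ : ℝ := (t - 1) / t with hμ_def
  have hμ0 : μ ≠ 0 := div_ne_zero (sub_ne_zero.mpr ht1) ht0
  have hμt : μ * (-t) = 1 - t := by rw [hμ_def]; field_simp; ring
  have hvb : P b - q = μ • A := by
    rw [hA_eq, smul_smul, hμt]
    apply Prod.ext <;>
      simp only [hq_def, hu_def, Prod.fst_add, Prod.snd_add, Prod.fst_sub, Prod.snd_sub,
        Prod.smul_fst, Prod.smul_snd, smul_eq_mul] <;> ring
  have hBa : B a = 0 := by rw [hB_def]; exact det2_self A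
  have hBb : B b = 0 := by
    show det2 A (P b - q) = 0
    rw [hvb, det2_smul_right, det2_self]; ring
  have hBzero : ∀ p : Fin n, B p = 0 → p = a ∨ p = b := by
    intro p hp
    by_contra hc
    push_neg at hc
    obtain ⟨ρ, hρ⟩ := exists_smul_of_det2_eq_zero hA0 hp
    apply hdet a b p hab (Ne.symm hc.2) (Ne.symm hc.1)
    have h1 : P p - P a = ((1 - ρ) * t) • u := by
      have h2 : P p - P a = (P p - q) - (P a - q) := by abel
      rw [h2, hρ, ← hA_def, hA_eq, smul_smul]
      apply Prod.ext <;>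
        simp [Prod.fst_sub, Prod.snd_sub, Prod.smul_fst, Prod.smul_snd, smul_eq_mul] <;> ring
    rw [← hu_def, h1, det2_smul_right, det2_self]
    ring
  have hvc : P c - q = (-r) • w := by
    have : P c - q = -(q - P c) := by abel
    rw [this, hq2]
    apply Prod.ext <;>
      simp [Prod.fst_neg, Prod.snd_neg, Prod.smul_fst, Prod.smul_snd, smul_eq_mul] <;> ring
  have hvd : P d - q = (1 - r) • w := by
    have h2 : P d - q = w - (q - P c) := by rw [hw_def]; abel
    rw [h2, hq2]
    apply Prod.ext <;>
      simp [Prod.fst_sub, Prod.snd_sub, Prod.smul_fst, Prod.smul_snd, smul_eq_mul] <;> ring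
  set W : ℝ := det2 A w with hW_def
  have hBc_eq : B c = (-r) * W := by
    show det2 A (P c - q) = (-r) * W
    rw [hvc, det2_smul_right, hW_def]
  have hBd_eq : B d = (1 - r) * W := by
    show det2 A (P d - q) = (1 - r) * W
    rw [hvd, det2_smul_right, hW_def]
  have hBc0 : B c ≠ 0 := by
    intro h
    rcases hBzero c h with h | h
    · exact hac h.symm
    · exact hbc h.symm
  have hW0 : W ≠ 0 := by
    intro h
    apply hBc0
    rw [hBc_eq, h]; ring
  have hBd0 : B d ≠ 0 := by
    intro h
    rcases hBzero d h with h | h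
    · exact had h.symm
    · exact hbd h.symm
  have hrr : r < 0 ∨ 1 < r := hr
  have hBcd_pos : 0 < B c * B d := by
    rw [hBc_eq, hBd_eq]
    have hWW : 0 < W * W := mul_self_pos.mpr hW0
    have h1 : 0 < (-r) * (1 - r) := by
      rcases hrr with h | h
      · nlinarith
      · nlinarith
    nlinarith [mul_pos h1 hWW]
  have hdotAA : 0 < dot2 A A := dot2_self_pos hA0
  have hκcd : κ c = κ d := by
    rw [hκ_def]
    show dot2 A (P c - q) / B c = dot2 A (P d - q) / B d
    rw [hvc, hvd, dot2_smul_right, dot2_smul_right, hBc_eq, hBd_eq]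
    rw [mul_div_mul_left _ _ (neg_ne_zero.mpr hr0)]
    rw [mul_div_mul_left _ _ (sub_ne_zero.mpr (Ne.symm hr1))]
  have tie3 : ∀ x y z : Fin n, x ≠ y → y ≠ z → x ≠ z →
      B x ≠ 0 → B y ≠ 0 → B z ≠ 0 → κ x = κ y → κ x = κ z → False := by
    intro x y z h1 h2 h3 bx by' bz e1 e2
    have cross : ∀ y' : Fin n, B y' ≠ 0 → κ x = κ y' →
        det2 (P x - q) (P y' - q) = 0 := by
      intro y' by2 e
      rw [hκ_def] at e
      simp only at e
      have e' : dot2 A (P x - q) * B y' = dot2 A (P y' - q) * B x :=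
        (div_eq_div_iff bx by2).mp e
      have key := det2_key A (P x - q) (P y' - q)
      rw [hB_def] at e' bx by2
      simp only at e' bx by2
      have : dot2 A A * det2 (P x - q) (P y' - q) = 0 := by nlinarith [key, e']
      rcases mul_eq_zero.mp this with h | h
      · exact absurd h (ne_of_gt hdotAA)
      · exact h
    have g1 := cross y by' e1
    have g2 := cross z bz e2
    have hvx : P x - q ≠ 0 := by
      intro h
      apply bx
      rw [hB_def]
      simp only [h]
      show det2 A 0 = 0
      simp [det2]
    obtain ⟨ρ, hρ⟩ := exists_smul_of_det2_eq_zero hvx g1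
    obtain ⟨τ, hτ⟩ := exists_smul_of_det2_eq_zero hvx g2
    apply hdet x y z h1 h2 h3
    have hy : P y - P x = (ρ - 1) • (P x - q) := by
      have : P y - P x = (P y - q) - (P x - q) := by abel
      rw [this, hρ]
      apply Prod.ext <;>
        simp [Prod.fst_sub, Prod.snd_sub, Prod.smul_fst, Prod.smul_snd, smul_eq_mul] <;> ring
    have hz : P z - P x = (τ - 1) • (P x - q) := by
      have : P z - P x = (P z - q) - (P x - q) := by abel
      rw [this, hτ]
      apply Prod.ext <;>
        simp [Prod.fst_sub, Prod.snd_sub, Prod.smul_fst, Prod.smul_snd, smul_eq_mul] <;> ring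
    rw [hy, hz]
    simp [det2, Prod.smul_fst, Prod.smul_snd, smul_eq_mul]
    ring
  -- the global sort key
  set bl : Fin n → ℕ := blockOfF B with hbl_def
  set ky : Fin n → ℝ := keyrF B κ a μ with hky_def
  set K : Fin n → Lex (ℕ × Lex (ℝ × ℕ)) :=
    fun p => toLex (bl p, toLex (ky p, (p : ℕ))) with hK_def
  obtain ⟨σ, hbij, hsm⟩ := exists_sorted_enum K (lexK_inj _ _)
  have hdist : ∀ i j : Fin n, (i : ℕ) ≠ (j : ℕ) → σ i ≠ σ j :=
    fun i j hij h => hij (congrArg Fin.val (hbij.injective h))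
  have hlex : ∀ x y : Fin n, K x < K y ↔
      (bl x < bl y ∨ (bl x = bl y ∧ (ky x < ky y ∨ (ky x = ky y ∧ (x : ℕ) < (y : ℕ))))) :=
    fun x y => lexlt_iff _ _ _ _ _ _
  have hblk_mono : ∀ i j : Fin n, i < j → bl (σ i) ≤ bl (σ j) := by
    intro i j hij
    rcases (hlex _ _).mp (hsm hij) with h | ⟨h, _⟩
    · exact h.le
    · exact h.le
  have hkey_mono : ∀ i j : Fin n, i < j → bl (σ i) = bl (σ j) → ky (σ i) ≤ ky (σ j) := by
    intro i j hij hb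
    rcases (hlex _ _).mp (hsm hij) with h | ⟨_, h | ⟨h, _⟩⟩
    · omega
    · exact h.le
    · exact h.le
  -- a and b are adjacent
  have hba' : b ≠ a := Ne.symm hab
  have hKab : K a < K b := by
    apply (hlex _ _).mpr
    right
    constructor
    · rw [hbl_def]
      rw [blockOfF_one hBa, blockOfF_one hBb]
    · left
      rw [hky_def]
      rw [keyrF_a hBa, keyrF_b hBb hba']
      norm_num
  have hab_pos : ∃ i j : Fin n, (j : ℕ) = (i : ℕ) + 1 ∧ σ i = a ∧ σ j = b := by
    apply pair_adjacent_general hsm hbij.surjective a b hKab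
    intro z hza hzb ⟨l1, l2⟩
    have e1 : bl a ≤ bl z := by
      rcases (hlex _ _).mp l1 with h | ⟨h, _⟩
      · exact h.le
      · exact h.le
    have e2 : bl z ≤ bl b := by
      rcases (hlex _ _).mp l2 with h | ⟨h, _⟩
      · exact h.le
      · exact h.le
    rw [hbl_def] at e1 e2
    rw [blockOfF_one hBa] at e1
    rw [blockOfF_one hBb] at e2
    have : B z = 0 := of_blockOfF_one (by omega)
    rcases hBzero z this with h | h
    · exact hza h
    · exact hzb h
  have habS : ∃ i j : Fin n, (j : ℕ) = (i : ℕ) + 1 ∧ s(σ i, σ j) = s(a, b) := by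
    obtain ⟨i, j, hij, h1, h2⟩ := hab_pos
    exact ⟨i, j, hij, by rw [h1, h2]⟩
  -- c and d are adjacent
  have hsigncd : (0 < B c ∧ 0 < B d) ∨ (B c < 0 ∧ B d < 0) := by
    rcases lt_trichotomy 0 (B c) with h | h | h
    · left; exact ⟨h, by nlinarith⟩
    · exact absurd h.symm hBc0
    · right; exact ⟨h, by nlinarith⟩
  have hblcd : bl c = bl d := by
    rw [hbl_def]
    rcases hsigncd with ⟨h1, h2⟩ | ⟨h1, h2⟩
    · rw [blockOfF_zero h1, blockOfF_zero h2]
    · rw [blockOfF_two h1, blockOfF_two h2]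
  have hkycd : ky c = ky d := by
    rw [hky_def]
    rcases hsigncd with ⟨h1, h2⟩ | ⟨h1, h2⟩
    · rw [keyrF_pos h1, keyrF_pos h2, hκcd]
    · rcases hμ0.lt_or_gt with hμ | hμ
      · rw [keyrF_neg_neg h1 hμ, keyrF_neg_neg h2 hμ, hκcd]
      · rw [keyrF_neg_pos h1 hμ, keyrF_neg_pos h2 hμ, hκcd]
  have hcdS : ∃ i j : Fin n, (j : ℕ) = (i : ℕ) + 1 ∧ s(σ i, σ j) = s(c, d) := by
    have inner : ∀ x y : Fin n, x ≠ y → B x ≠ 0 → B y ≠ 0 → bl x = bl y → ky x = ky y →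
        κ x = κ y → (x : ℕ) < (y : ℕ) →
        ∃ i j : Fin n, (j : ℕ) = (i : ℕ) + 1 ∧ s(σ i, σ j) = s(x, y) := by
      intro x y hxy hBx hBy hblxy hkyxy hκxy hv
      have hKlt : K x < K y := (hlex _ _).mpr (Or.inr ⟨hblxy, Or.inr ⟨hkyxy, hv⟩⟩)
      have hno : ∀ z : Fin n, z ≠ x → z ≠ y → ¬(K x < K z ∧ K z < K y) := by
        intro z hzx hzy ⟨l1, l2⟩
        have e1 : bl x ≤ bl z := by
          rcases (hlex _ _).mp l1 with h | ⟨h, _⟩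
          · exact h.le
          · exact h.le
        have e2 : bl z ≤ bl y := by
          rcases (hlex _ _).mp l2 with h | ⟨h, _⟩
          · exact h.le
          · exact h.le
        have hblz : bl z = bl x := by omega
        have e3 : ky x ≤ ky z := by
          rcases (hlex _ _).mp l1 with h | ⟨_, h | ⟨h, _⟩⟩
          · omega
          · exact h.le
          · exact h.le
        have e4 : ky z ≤ ky y := by
          rcases (hlex _ _).mp l2 with h | ⟨_, h | ⟨h, _⟩⟩
          · omega
          · exact h.le
          · exact h.le
        have hkyz : ky z = ky x := by
          rw [hkyxy] at e3 ⊢; linarith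
        -- z is in the same open block, with the same κ value
        have hκzx : κ z = κ x ∧ B z ≠ 0 := by
          rw [hbl_def] at hblz
          rw [hky_def] at hkyz
          rcases lt_trichotomy 0 (B x) with hx | hx | hx
          · rw [blockOfF_zero hx] at hblz
            have hz : 0 < B z := of_blockOfF_zero hblz
            rw [keyrF_pos hz, keyrF_pos hx] at hkyz
            exact ⟨hkyz, hz.ne'⟩
          · exact absurd hx.symm hBx
          · rw [blockOfF_two hx] at hblz
            have hz : B z < 0 := of_blockOfF_two hblz
            rcases hμ0.lt_or_gt with hμ | hμ
            · rw [keyrF_neg_neg hz hμ, keyrF_neg_neg hx hμ] at hkyz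
              exact ⟨by linarith, hz.ne⟩
            · rw [keyrF_neg_pos hz hμ, keyrF_neg_pos hx hμ] at hkyz
              exact ⟨hkyz, hz.ne⟩
        exact tie3 x y z hxy (Ne.symm hzy) (Ne.symm hzx) hBx hBy hκzx.2
          hκxy (hκzx.1.symm)
      obtain ⟨i, j, hij, h1, h2⟩ := pair_adjacent_general hsm hbij.surjective x y hKlt hno
      exact ⟨i, j, hij, by rw [h1, h2]⟩
    rcases lt_trichotomy (c : ℕ) (d : ℕ) with h | h | h
    · exact inner c d hcd hBc0 hBd0 hblcd hkycd hκcd h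
    · exact absurd (Fin.ext h) hcd
    · obtain ⟨i, j, hij, he⟩ := inner d c (Ne.symm hcd) hBd0 hBc0 hblcd.symm hkycd.symm hκcd.symm h
      exact ⟨i, j, hij, he.trans Sym2.eq_swap⟩
  -- the nonadjacent separation
  have hσa_next : ∀ i j : Fin n, (j : ℕ) = (i : ℕ) + 1 → σ i = a → σ j = b := by
    intro i j hij hi
    obtain ⟨i', j', hij', h1, h2⟩ := hab_pos
    have : i = i' := hbij.injective (by rw [hi, h1])
    subst this
    have : j = j' := Fin.ext (by omega)
    subst this
    exact h2
  have hσb_prev : ∀ i j : Fin n, (j : ℕ) = (i : ℕ) + 1 → σ j = b → σ i = a := by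
    intro i j hij hj
    obtain ⟨i', j', hij', h1, h2⟩ := hab_pos
    have : j = j' := hbij.injective (by rw [hj, h2])
    subst this
    have : i = i' := Fin.ext (by omega)
    subst this
    exact h1
  have hnonadj := nonadj_main P hgen σ hdist A q B κ μ a b hba'
    (fun p' => rfl) (fun p' => rfl) hBa hBb hBzero hμ0 hdotAA rfl hvb tie3
    (by intro i j hij; exact hblk_mono i j hij)
    (by intro i j hij hb; exact hkey_mono i j hij hb)
    hab_pos hσa_next hσb_prev
  exact assemble P hadjP a b c d σ hbij hnonadj habS hcdS

lemma line_inter (x1 y1 x2 y2 : ℝ × ℝ) (hD : det2 (y1 - x1) (y2 - x2) ≠ 0) :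
    x1 + (det2 (x2 - x1) (y2 - x2) / det2 (y1 - x1) (y2 - x2)) • (y1 - x1)
      = x2 + (det2 (x2 - x1) (y1 - x1) / det2 (y1 - x1) (y2 - x2)) • (y2 - x2) := by
  set D := det2 (y1 - x1) (y2 - x2) with hD_def
  set t := det2 (x2 - x1) (y2 - x2) / D with ht_def
  set r := det2 (x2 - x1) (y1 - x1) / D with hr_def
  have hts : t * D = det2 (x2 - x1) (y2 - x2) := by rw [ht_def]; field_simp
  have hrs : r * D = det2 (x2 - x1) (y1 - x1) := by rw [hr_def]; field_simp
  apply Prod.ext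
  · apply mul_left_cancel₀ hD
    have e1 : D * ((x1 + t • (y1 - x1)).1) = D * x1.1 + (t * D) * (y1 - x1).1 := by
      simp only [Prod.fst_add, Prod.smul_fst, smul_eq_mul]; ring
    have e2 : D * ((x2 + r • (y2 - x2)).1) = D * x2.1 + (r * D) * (y2 - x2).1 := by
      simp only [Prod.fst_add, Prod.smul_fst, smul_eq_mul]; ring
    rw [e1, e2, hts, hrs]
    simp only [hD_def, det2, Prod.fst_sub, Prod.snd_sub]
    ring
  · apply mul_left_cancel₀ hD
    have e1 : D * ((x1 + t • (y1 - x1)).2) = D * x1.2 + (t * D) * (y1 - x1).2 := by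
      simp only [Prod.snd_add, Prod.smul_snd, smul_eq_mul]; ring
    have e2 : D * ((x2 + r • (y2 - x2)).2) = D * x2.2 + (r * D) * (y2 - x2).2 := by
      simp only [Prod.snd_add, Prod.smul_snd, smul_eq_mul]; ring
    rw [e1, e2, hts, hrs]
    simp only [hD_def, det2, Prod.fst_sub, Prod.snd_sub]
    ring

lemma mem_seg_param (x y : ℝ × ℝ) (t : ℝ) (h0 : 0 ≤ t) (h1 : t ≤ 1) :
    x + t • (y - x) ∈ segment ℝ x y := by
  refine ⟨1 - t, t, by linarith, h0, by ring, ?_⟩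
  apply Prod.ext <;>
    simp only [Prod.fst_add, Prod.snd_add, Prod.fst_sub, Prod.snd_sub,
      Prod.smul_fst, Prod.smul_snd, smul_eq_mul] <;> ring

end GHP

/-- For `n` points in general position and two disjoint (independent, non-crossing) segments
`e = [P a, P b]` and `e' = [P c, P d]` spanned by the points, there is a plane Hamiltonian
path on the points containing both segments. -/
theorem geometric_ham_path_two_prescribed_edges (n : ℕ) (P : Fin n → ℝ × ℝ)
    (hinj : Function.Injective P)
    (hgen : ∀ i j k : Fin n, i ≠ j → j ≠ k → i ≠ k →
      ¬Collinear ℝ ({P i, P j, P k} : Set (ℝ × ℝ)))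
    (a b c d : Fin n) (hab : a ≠ b) (hcd : c ≠ d)
    (hac : a ≠ c) (had : a ≠ d) (hbc : b ≠ c) (hbd : b ≠ d)
    (hdisj : segment ℝ (P a) (P b) ∩ segment ℝ (P c) (P d) = ∅) :
    ∃ σ : Fin n → Fin n, Function.Bijective σ ∧
      (∀ i₁ j₁ i₂ j₂ : Fin n, (j₁ : ℕ) = (i₁ : ℕ) + 1 → (j₂ : ℕ) = (i₂ : ℕ) + 1 → i₁ ≠ i₂ →
        ∀ p ∈ segment ℝ (P (σ i₁)) (P (σ j₁)) ∩ segment ℝ (P (σ i₂)) (P (σ j₂)),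
          (p = P (σ i₁) ∨ p = P (σ j₁)) ∧ (p = P (σ i₂) ∨ p = P (σ j₂))) ∧
      (∃ i j : Fin n, (j : ℕ) = (i : ℕ) + 1 ∧ s(σ i, σ j) = s(a, b)) ∧
      (∃ i j : Fin n, (j : ℕ) = (i : ℕ) + 1 ∧ s(σ i, σ j) = s(c, d)) := by
    classical
  by_cases hD : GHP.det2 (P b - P a) (P d - P c) = 0
  · exact GHP.par P hinj hgen a b c d hab hcd hD
  · by_cases hR : GHP.det2 (P c - P a) (P b - P a) / GHP.det2 (P b - P a) (P d - P c) < 0 ∨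
        1 < GHP.det2 (P c - P a) (P b - P a) / GHP.det2 (P b - P a) (P d - P c)
    · exact GHP.aux P hinj hgen a b c d hab hcd hac had hbc hbd hD hR
    · push_neg at hR
      set t := GHP.det2 (P c - P a) (P d - P c) / GHP.det2 (P b - P a) (P d - P c) with ht_def
      have htr : t < 0 ∨ 1 < t := by
        by_contra hcon
        push_neg at hcon
        have hq := GHP.line_inter (P a) (P b) (P c) (P d) hD
        have hm1 : P a + t • (P b - P a) ∈ segment ℝ (P a) (P b) :=
          GHP.mem_seg_param (P a) (P b) t hcon.1 hcon.2
        have hm2 : P a + t • (P b - P a) ∈ segment ℝ (P c) (P d) := by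
          rw [hq]
          exact GHP.mem_seg_param (P c) (P d) _ hR.1 hR.2
        exact Set.eq_empty_iff_forall_notMem.mp hdisj _ ⟨hm1, hm2⟩
      have hD' : GHP.det2 (P d - P c) (P b - P a) ≠ 0 := by
        intro h
        apply hD
        have e : GHP.det2 (P b - P a) (P d - P c) = -GHP.det2 (P d - P c) (P b - P a) := by
          simp only [GHP.det2]; ring
        rw [e, h]; ring
      have hr' : GHP.det2 (P a - P c) (P d - P c) / GHP.det2 (P d - P c) (P b - P a) < 0 ∨
          1 < GHP.det2 (P a - P c) (P d - P c) / GHP.det2 (P d - P c) (P b - P a) := by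
        have e1 : GHP.det2 (P a - P c) (P d - P c) = -GHP.det2 (P c - P a) (P d - P c) := by
          simp only [GHP.det2, Prod.fst_sub, Prod.snd_sub]; ring
        have e2 : GHP.det2 (P d - P c) (P b - P a) = -GHP.det2 (P b - P a) (P d - P c) := by
          simp only [GHP.det2, Prod.fst_sub, Prod.snd_sub]; ring
        rw [e1, e2, neg_div_neg_eq, ← ht_def]
        exact htr
      obtain ⟨σ, h1, h2, h3, h4⟩ :=
        GHP.aux P hinj hgen c d a b hcd hab hac.symm hbc.symm had.symm hbd.symm hD' hr'
      exact ⟨σ, h1, h2, h4, h3⟩
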